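/- arXiv:1904.05971 — 12 statements merged into one kernel-verified Lean document; each statement's English description precedes it below -/
import Mathlib

section
/- Let A and B be bounded linear operators on H such that A and B* are essentially isometric, and assume that ‖Aⁿx‖ → 0 and ‖B*ⁿx‖ → 0 as n → ∞ for every x ∈ H. Then for T ∈ B(H), the sequence {AⁿTBⁿ} converges in operator norm if and only if T admits a decomposition T = T₀ + K where T₀ ∈ B(H) satisfies AT₀B = T₀ and K is a compact operator on H. -/
open ContinuousLinearMap Filter Topology

/-!
If `AⁿTBⁿ → L` then `ALB = L`, so `Aⁿ(T - L)Bⁿ → 0`. Since `1 - A*ⁿAⁿ` and `1 - BⁿB*ⁿ` are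
compact, `A*ⁿ(AⁿSBⁿ)B*ⁿ - S` is compact for every `S`, and the powers of `A*` and `B*` are
uniformly bounded by Banach–Steinhaus; so `T - L` is a norm limit of compact operators.
Conversely, a bounded sequence tending strongly to zero tends to zero uniformly on compact sets
(Ascoli), hence `AⁿKBⁿ → 0` in norm when `K` is compact.
-/

section Monoid

variable {M : Type*} [Monoid M]

theorem pow_mul_mul_pow_eq_of_mul_mul_eq {a b x : M} (h : a * x * b = x) (n : ℕ) :
    a ^ n * x * b ^ n = x := by
  induction n with
  | zero => simp
  | succ n ih =>
    calc a ^ (n + 1) * x * b ^ (n + 1) = a ^ n * (a * x * b) * b ^ n := by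
          rw [pow_succ a n, pow_succ' b n]; simp only [mul_assoc]
      _ = x := by rw [h, ih]

theorem mul_mul_eq_of_tendsto_pow_mul_mul_pow [TopologicalSpace M] [ContinuousMul M] [T2Space M]
    {a b x L : M} (h : Tendsto (fun n : ℕ => a ^ n * x * b ^ n) atTop (𝓝 L)) :
    a * L * b = L := by
  have hshift : Tendsto (fun n : ℕ => a * (a ^ n * x * b ^ n) * b) atTop (𝓝 L) := by
    refine (h.comp (tendsto_add_atTop_nat 1)).congr fun n => ?_
    simp only [Function.comp_apply, pow_succ' a n, pow_succ b n, mul_assoc]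
  exact tendsto_nhds_unique ((h.const_mul a).mul_const b) hshift

end Monoid

theorem norm_star_pow {R : Type*} [NormedRing R] [StarRing R] [NormedStarGroup R] (a : R)
    (n : ℕ) : ‖star a ^ n‖ = ‖a ^ n‖ := by
  rw [← star_pow, norm_star]

section Normed

variable {𝕜 E F : Type*} [NontriviallyNormedField 𝕜] [NormedAddCommGroup E] [NormedSpace 𝕜 E]
  [NormedAddCommGroup F] [NormedSpace 𝕜 F]

theorem exists_norm_le_of_tendsto_apply [CompleteSpace E] {T : ℕ → E →L[𝕜] F} {f : E → F}
    (hT : ∀ x, Tendsto (fun n => T n x) atTop (𝓝 (f x))) : ∃ C, ∀ n, ‖T n‖ ≤ C :=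
  banach_steinhaus fun x =>
    let ⟨C, hC⟩ := (hT x).norm.bddAbove_range
    ⟨C, fun n => hC ⟨n, rfl⟩⟩

theorem tendstoUniformlyOn_zero_of_tendsto_apply {T : ℕ → E →L[𝕜] F} {C : ℝ}
    (hC : ∀ n, ‖T n‖ ≤ C) (hT : ∀ x, Tendsto (fun n => T n x) atTop (𝓝 0))
    {S : Set E} (hS : IsCompact S) :
    TendstoUniformlyOn (fun n => ⇑(T n)) 0 atTop S := by
  have : CompactSpace S := isCompact_iff_compactSpace.mp hS
  have hequi : Equicontinuous ((↑) ∘ T) := by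
    have := (NormedSpace.equicontinuous_TFAE T).out 5 1
    exact this.mp ⟨C, hC⟩
  have hequiS := (equicontinuous_restrict_iff _).mpr (hequi.equicontinuousOn S)
  rw [tendstoUniformlyOn_iff_tendstoUniformly_comp_coe]
  refine UniformFun.tendsto_iff_tendstoUniformly.mp ?_
  exact (hequiS.tendsto_uniformFun_iff_pi _ _).mpr (tendsto_pi_nhds.mpr fun x => hT x)

theorem IsCompactOperator.mul_right {f : E →L[𝕜] E} (hf : IsCompactOperator f) (g : E →L[𝕜] E) :
    IsCompactOperator ⇑(f * g) :=
  hf.comp_clm g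

theorem IsCompactOperator.mul_left {f : E →L[𝕜] E} (hf : IsCompactOperator f) (g : E →L[𝕜] E) :
    IsCompactOperator ⇑(g * f) :=
  hf.clm_comp g

theorem isCompactOperator_one_sub_pow_mul_pow {a b : E →L[𝕜] E}
    (h : IsCompactOperator ⇑(1 - b * a)) (n : ℕ) : IsCompactOperator ⇑(1 - b ^ n * a ^ n) := by
  induction n with
  | zero => simpa using isCompactOperator_zero
  | succ n ih =>
    have hsplit : 1 - b ^ (n + 1) * a ^ (n + 1) =
        (1 - b ^ n * a ^ n) + b ^ n * ((1 - b * a) * a ^ n) := by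
      rw [pow_succ b n, pow_succ' a n]; noncomm_ring
    rw [hsplit]
    exact ih.add ((h.mul_right _).mul_left _)

theorem isCompactOperator_mul_mul_mul_sub {a b c d : E →L[𝕜] E}
    (hba : IsCompactOperator ⇑(1 - b * a)) (hdc : IsCompactOperator ⇑(1 - d * c))
    (S : E →L[𝕜] E) : IsCompactOperator ⇑(b * (a * S * d) * c - S) := by
  have hsplit : b * (a * S * d) * c - S = -((1 - b * a) * (S * d * c)) - S * (1 - d * c) := by
    noncomm_ring
  rw [hsplit]
  exact (hba.mul_right _).neg.sub (hdc.mul_left _)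

theorem isCompactOperator_of_tendsto_pow_mul_mul_pow [CompleteSpace E] {A A' B B' S : E →L[𝕜] E}
    (hA : IsCompactOperator ⇑(1 - A' * A)) (hB : IsCompactOperator ⇑(1 - B * B'))
    (hA' : ∃ C, ∀ n, ‖A' ^ n‖ ≤ C) (hB' : ∃ C, ∀ n, ‖B' ^ n‖ ≤ C)
    (hS : Tendsto (fun n => A ^ n * S * B ^ n) atTop (𝓝 0)) : IsCompactOperator S := by
  have hconj : Tendsto (fun n => A' ^ n * (A ^ n * S * B ^ n) * B' ^ n) atTop (𝓝 0) :=
    (isBoundedUnder_le_mul_tendsto_zero (isBoundedUnder_of hA') hS).zero_mul_isBoundedUnder_le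
      (isBoundedUnder_of hB')
  have hcompact : ∀ n : ℕ, IsCompactOperator ⇑(S - A' ^ n * (A ^ n * S * B ^ n) * B' ^ n) :=
    fun n => by
      rw [← neg_sub]
      exact (isCompactOperator_mul_mul_mul_sub (isCompactOperator_one_sub_pow_mul_pow hA n)
        (isCompactOperator_one_sub_pow_mul_pow hB n) S).neg
  exact isCompactOperator_of_tendsto (by simpa using tendsto_const_nhds.sub hconj)
    (Eventually.of_forall hcompact)

end Normed

theorem IsCompactOperator.tendsto_comp_nhds_zero {𝕜 E F G : Type*} [RCLike 𝕜]
    [NormedAddCommGroup E] [NormedSpace 𝕜 E] [NormedAddCommGroup F] [NormedSpace 𝕜 F]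
    [NormedAddCommGroup G] [NormedSpace 𝕜 G] {K : G →L[𝕜] E} (hK : IsCompactOperator K)
    {T : ℕ → E →L[𝕜] F} {C : ℝ} (hC : ∀ n, ‖T n‖ ≤ C)
    (hT : ∀ x, Tendsto (fun n => T n x) atTop (𝓝 0)) :
    Tendsto (fun n => (T n).comp K) atTop (𝓝 0) := by
  have hunif := tendstoUniformlyOn_zero_of_tendsto_apply hC hT
    (hK.isCompact_closure_image_closedBall 1)
  rw [NormedAddGroup.tendsto_nhds_zero]
  intro ε hε
  filter_upwards [Metric.tendstoUniformlyOn_iff.mp hunif (ε / 2) (half_pos hε)] with n hn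
  refine (opNorm_le_of_unit_norm (half_pos hε).le fun x hx => ?_).trans_lt (half_lt_self hε)
  have hKx : K x ∈ closure (K '' Metric.closedBall 0 1) :=
    subset_closure ⟨x, by simp [hx], rfl⟩
  simpa using (hn _ hKx).le

theorem tendsto_pow_mul_mul_pow_of_isCompactOperator {𝕜 E : Type*} [RCLike 𝕜]
    [NormedAddCommGroup E] [NormedSpace 𝕜 E] [CompleteSpace E] {A B K : E →L[𝕜] E}
    (hA : ∀ x, Tendsto (fun n => (A ^ n) x) atTop (𝓝 0)) (hB : ∃ C, ∀ n, ‖B ^ n‖ ≤ C)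
    (hK : IsCompactOperator K) : Tendsto (fun n => A ^ n * K * B ^ n) atTop (𝓝 0) :=
  have ⟨_, hAC⟩ := exists_norm_le_of_tendsto_apply hA
  (hK.tendsto_comp_nhds_zero hAC hA).zero_mul_isBoundedUnder_le (isBoundedUnder_of hB)

theorem stmt_0_general {H : Type*} [NormedAddCommGroup H] [InnerProductSpace ℂ H]
    [CompleteSpace H]
    (A B T : H →L[ℂ] H)
    (hA : IsCompactOperator (⇑((1 : H →L[ℂ] H) - adjoint A * A)))
    (hB : IsCompactOperator (⇑((1 : H →L[ℂ] H) - B * adjoint B)))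
    (hAn : ∀ x : H, Tendsto (fun n : ℕ => ‖(A ^ n) x‖) atTop (𝓝 0))
    (hBn : ∀ x : H, Tendsto (fun n : ℕ => ‖((adjoint B) ^ n) x‖) atTop (𝓝 0)) :
    (∃ L : H →L[ℂ] H, Tendsto (fun n : ℕ => A ^ n * T * B ^ n) atTop (𝓝 L)) ↔
      (∃ T₀ K : H →L[ℂ] H, T = T₀ + K ∧ A * T₀ * B = T₀ ∧ IsCompactOperator ⇑K) := by
  have hAn' x := tendsto_zero_iff_norm_tendsto_zero.mpr (hAn x)
  have hBn' x := tendsto_zero_iff_norm_tendsto_zero.mpr (hBn x)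
  have hApow : ∃ C, ∀ n, ‖A ^ n‖ ≤ C := exists_norm_le_of_tendsto_apply hAn'
  have hB'pow : ∃ C, ∀ n, ‖adjoint B ^ n‖ ≤ C := exists_norm_le_of_tendsto_apply hBn'
  have hA'pow : ∃ C, ∀ n, ‖adjoint A ^ n‖ ≤ C := by
    simpa only [← star_eq_adjoint, norm_star_pow] using hApow
  have hBpow : ∃ C, ∀ n, ‖B ^ n‖ ≤ C := by
    simpa only [← star_eq_adjoint, norm_star_pow] using hB'pow
  constructor
  · rintro ⟨L, hL⟩
    have hALB : A * L * B = L := mul_mul_eq_of_tendsto_pow_mul_mul_pow hL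
    refine ⟨L, T - L, by abel, hALB, isCompactOperator_of_tendsto_pow_mul_mul_pow hA hB
      hA'pow hB'pow ?_⟩
    simpa [mul_sub, sub_mul, pow_mul_mul_pow_eq_of_mul_mul_eq hALB] using hL.sub_const L
  · rintro ⟨T₀, K, rfl, hT₀, hK⟩
    refine ⟨T₀, ?_⟩
    simpa [mul_add, add_mul, pow_mul_mul_pow_eq_of_mul_mul_eq hT₀] using
      (tendsto_pow_mul_mul_pow_of_isCompactOperator hAn' hBpow hK).const_add T₀

/-- **Theorem 2.1.** Let `A` and `B*` be essentially isometric operators on a complex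
separable infinite-dimensional Hilbert space `H` such that `‖Aⁿx‖ → 0` and `‖B*ⁿx‖ → 0`
for all `x ∈ H`. If `T ∈ B(H)`, then the sequence `{AⁿTBⁿ}` converges in operator norm
if and only if `T = T₀ + K` where `AT₀B = T₀` and `K` is compact. -/
theorem stmt_0 {H : Type*} [NormedAddCommGroup H] [InnerProductSpace ℂ H]
    [CompleteSpace H] [TopologicalSpace.SeparableSpace H]
    (hinf : ¬ FiniteDimensional ℂ H)
    (A B T : H →L[ℂ] H)
    (hA : IsCompactOperator (⇑((1 : H →L[ℂ] H) - adjoint A * A)))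
    (hB : IsCompactOperator (⇑((1 : H →L[ℂ] H) - B * adjoint B)))
    (hAn : ∀ x : H, Tendsto (fun n : ℕ => ‖(A ^ n) x‖) atTop (𝓝 0))
    (hBn : ∀ x : H, Tendsto (fun n : ℕ => ‖((adjoint B) ^ n) x‖) atTop (𝓝 0)) :
    (∃ L : H →L[ℂ] H, Tendsto (fun n : ℕ => A ^ n * T * B ^ n) atTop (𝓝 L)) ↔
      (∃ T₀ K : H →L[ℂ] H, T = T₀ + K ∧ A * T₀ * B = T₀ ∧ IsCompactOperator ⇑K) :=
  stmt_0_general A B T hA hB hAn hBn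
end

section
/- Let A, B ∈ B(H) satisfy ‖Aⁿx‖ → 0 and ‖B*ⁿx‖ → 0 as n → ∞ for every x ∈ H. Then for every compact operator K on H, ‖AⁿKBⁿ‖ → 0 in operator norm as n → ∞. -/
open ContinuousLinearMap Filter Topology

/-- **Lemma 2.3 (a).** If `‖Aⁿx‖ → 0` and `‖B*ⁿx‖ → 0` for all `x ∈ H`, then
`‖AⁿKBⁿ‖ → 0` for every compact operator `K` on `H`. -/
theorem stmt_1 {H : Type*} [NormedAddCommGroup H] [InnerProductSpace ℂ H]
    [CompleteSpace H] [TopologicalSpace.SeparableSpace H]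
    (hinf : ¬ FiniteDimensional ℂ H)
    (A B : H →L[ℂ] H)
    (hAn : ∀ x : H, Tendsto (fun n : ℕ => ‖(A ^ n) x‖) atTop (𝓝 0))
    (hBn : ∀ x : H, Tendsto (fun n : ℕ => ‖((adjoint B) ^ n) x‖) atTop (𝓝 0))
    (K : H →L[ℂ] H) (hK : IsCompactOperator ⇑K) :
    Tendsto (fun n : ℕ => ‖A ^ n * K * B ^ n‖) atTop (𝓝 0) := by
  -- uniform bound on ‖A^n‖
  obtain ⟨MA, hMA⟩ : ∃ C, ∀ n : ℕ, ‖A ^ n‖ ≤ C := by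
    apply banach_steinhaus
    intro x
    obtain ⟨C, hC⟩ := (hAn x).bddAbove_range
    exact ⟨C, fun n => hC ⟨n, rfl⟩⟩
  -- uniform bound on ‖B^n‖, via the adjoint
  obtain ⟨MB, hMB⟩ : ∃ C, ∀ n : ℕ, ‖(adjoint B) ^ n‖ ≤ C := by
    apply banach_steinhaus
    intro x
    obtain ⟨C, hC⟩ := (hBn x).bddAbove_range
    exact ⟨C, fun n => hC ⟨n, rfl⟩⟩
  have hBnorm : ∀ n : ℕ, ‖B ^ n‖ ≤ MB := by
    intro n
    have h1 : adjoint (B ^ n) = (adjoint B) ^ n := by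
      rw [← star_eq_adjoint, ← star_eq_adjoint, star_pow]
    calc ‖B ^ n‖ = ‖adjoint (B ^ n)‖ :=
          ((adjoint (𝕜 := ℂ) (E := H) (F := H)).norm_map (B ^ n)).symm
      _ = ‖(adjoint B) ^ n‖ := by rw [h1]
      _ ≤ MB := hMB n
  have hMA0 : 0 ≤ MA := le_trans (norm_nonneg _) (hMA 0)
  have hMB0 : 0 ≤ MB := le_trans (norm_nonneg _) (hMB 0)
  -- core: ‖A^n ∘L K‖ → 0
  have hcore : Tendsto (fun n : ℕ => ‖(A ^ n) ∘L K‖) atTop (𝓝 0) := by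
    rw [NormedAddCommGroup.tendsto_nhds_zero]
    intro ε hε
    set δ : ℝ := ε / (2 * (MA + 1)) with hδdef
    have hδ : 0 < δ := by positivity
    -- the closure of the image of the closed unit ball is compact
    have hScompact : IsCompact (closure (⇑K '' Metric.closedBall 0 1)) :=
      IsCompactOperator.isCompact_closure_image_closedBall (f := (K : H →ₗ[ℂ] H)) hK 1
    obtain ⟨t, htfin, hcover⟩ := Metric.totallyBounded_iff.mp hScompact.totallyBounded δ hδ
    -- eventually, ‖A^n y‖ < δ for all y in the finite net t
    have hev : ∀ᶠ n : ℕ in atTop, ∀ y ∈ t, ‖(A ^ n) y‖ < δ := by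
      rw [htfin.eventually_all]
      intro y _
      have := (hAn y).eventually (eventually_lt_nhds hδ)
      simpa using this
    filter_upwards [hev] with n hn
    rw [Real.norm_eq_abs, abs_of_nonneg (norm_nonneg _)]
    have hbound : ∀ x : H, ‖x‖ ≤ 1 → ‖((A ^ n) ∘L K) x‖ ≤ (MA + 1) * δ := by
      intro x hx
      have hKx : K x ∈ closure (⇑K '' Metric.closedBall 0 1) :=
        subset_closure ⟨x, by simpa [Metric.mem_closedBall, dist_zero_right] using hx, rfl⟩
      obtain ⟨y, hy, hdist⟩ := Set.mem_iUnion₂.mp (hcover hKx)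
      have hdist' : ‖K x - y‖ < δ := by
        rwa [Metric.mem_ball, dist_eq_norm] at hdist
      calc ‖((A ^ n) ∘L K) x‖ = ‖(A ^ n) (K x - y) + (A ^ n) y‖ := by
            simp [map_sub]
        _ ≤ ‖(A ^ n) (K x - y)‖ + ‖(A ^ n) y‖ := norm_add_le _ _
        _ ≤ MA * δ + δ := by
            gcongr
            · calc ‖(A ^ n) (K x - y)‖ ≤ ‖A ^ n‖ * ‖K x - y‖ := le_opNorm _ _
                _ ≤ MA * δ := by
                    apply mul_le_mul (hMA n) hdist'.le (norm_nonneg _) hMA0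
            · exact (hn y hy).le
        _ = (MA + 1) * δ := by ring
    have : ‖(A ^ n) ∘L K‖ ≤ (MA + 1) * δ := by
      apply opNorm_le_of_ball one_pos (by positivity)
      intro x hx
      rcases eq_or_ne x 0 with rfl | hx0
      · simp [mul_nonneg (by positivity : (0:ℝ) ≤ (MA+1)*δ)]
      · have hxn : 0 < ‖x‖ := norm_pos_iff.mpr hx0
        have := hbound (‖x‖⁻¹ • x) (by
          rw [norm_smul, norm_inv, norm_norm]
          exact le_of_eq (inv_mul_cancel₀ hxn.ne'))
        rw [ContinuousLinearMap.map_smul_of_tower, norm_smul, norm_inv, norm_norm] at this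
        calc ‖((A ^ n) ∘L K) x‖ = ‖x‖ * (‖x‖⁻¹ * ‖((A ^ n) ∘L K) x‖) := by
              field_simp
          _ ≤ ‖x‖ * ((MA + 1) * δ) := by
              apply mul_le_mul_of_nonneg_left this (norm_nonneg _)
          _ = (MA + 1) * δ * ‖x‖ := by ring
    calc ‖(A ^ n) ∘L K‖ ≤ (MA + 1) * δ := this
      _ = ε / 2 := by
          rw [hδdef]; field_simp
      _ < ε := by linarith
  -- conclude by squeezing
  have hsq : ∀ n : ℕ, ‖A ^ n * K * B ^ n‖ ≤ ‖(A ^ n) ∘L K‖ * MB := by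
    intro n
    calc ‖A ^ n * K * B ^ n‖ = ‖((A ^ n) ∘L K) ∘L (B ^ n)‖ := rfl
      _ ≤ ‖(A ^ n) ∘L K‖ * ‖B ^ n‖ := opNorm_comp_le _ _
      _ ≤ ‖(A ^ n) ∘L K‖ * MB := by
          apply mul_le_mul_of_nonneg_left (hBnorm n) (norm_nonneg _)
  have hlim : Tendsto (fun n : ℕ => ‖(A ^ n) ∘L K‖ * MB) atTop (𝓝 0) := by
    simpa using hcore.mul_const MB
  exact squeeze_zero (fun n => norm_nonneg _) hsq hlim
end

section
/- Let A ∈ B(H) be such that I − AA* is compact and ‖A*ⁿx‖ → 0 as n → ∞ for every x ∈ H. Then for T ∈ B(H), the sequence {A*ⁿTAⁿ} converges in operator norm if and only if T admits a decomposition T = T₀ + K where T₀ ∈ B(H) satisfies A*T₀A = T₀ and K is a compact operator on H. -/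
open ContinuousLinearMap Filter Topology Metric Set

set_option linter.unusedSectionVars false

namespace Stmt3Aux

variable {H : Type*} [NormedAddCommGroup H] [InnerProductSpace ℂ H] [CompleteSpace H]

lemma compact_mul_left {X : H →L[ℂ] H} (h : IsCompactOperator ⇑X) (Y : H →L[ℂ] H) :
    IsCompactOperator ⇑(Y * X) :=
  h.clm_comp Y

lemma compact_mul_right {X : H →L[ℂ] H} (h : IsCompactOperator ⇑X) (Y : H →L[ℂ] H) :
    IsCompactOperator ⇑(X * Y) :=
  h.comp_clm Y

lemma clm_add {X Y : H →L[ℂ] H} (hX : IsCompactOperator ⇑X) (hY : IsCompactOperator ⇑Y) :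
    IsCompactOperator ⇑(X + Y) :=
  hX.add hY

lemma clm_sub {X Y : H →L[ℂ] H} (hX : IsCompactOperator ⇑X) (hY : IsCompactOperator ⇑Y) :
    IsCompactOperator ⇑(X - Y) :=
  hX.sub hY

lemma invar_pow {A L : H →L[ℂ] H} (h : adjoint A * L * A = L) (n : ℕ) :
    (adjoint A) ^ n * L * A ^ n = L := by
  induction n with
  | zero => simp
  | succ n ih =>
    have e : (adjoint A) ^ (n+1) * L * A ^ (n+1)
        = (adjoint A) ^ n * (adjoint A * L * A) * A ^ n := by
      rw [pow_succ, pow_succ']; noncomm_ring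
    rw [e, h, ih]

lemma exists_bound (A : H →L[ℂ] H)
    (hAn : ∀ x : H, Tendsto (fun n : ℕ => ‖((adjoint A) ^ n) x‖) atTop (𝓝 0)) :
    ∃ M : ℝ, 0 ≤ M ∧ (∀ n : ℕ, ‖(adjoint A) ^ n‖ ≤ M) ∧ (∀ n : ℕ, ‖A ^ n‖ ≤ M) := by
  obtain ⟨C, hC⟩ := banach_steinhaus (g := fun n : ℕ => (adjoint A) ^ n) (fun x => by
    obtain ⟨c, hc⟩ := (hAn x).bddAbove_range
    exact ⟨c, fun n => hc (Set.mem_range_self n)⟩)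
  refine ⟨max C 0, le_max_right _ _, fun n => (hC n).trans (le_max_left _ _), fun n => ?_⟩
  have : ‖A ^ n‖ = ‖(adjoint A) ^ n‖ := by
    rw [← ContinuousLinearMap.star_eq_adjoint, ← star_pow, norm_star]
  rw [this]; exact (hC n).trans (le_max_left _ _)

lemma compact_one_sub_pow {A : H →L[ℂ] H}
    (hA : IsCompactOperator (⇑((1 : H →L[ℂ] H) - A * adjoint A))) (n : ℕ) :
    IsCompactOperator ⇑((1 : H →L[ℂ] H) - A ^ n * (adjoint A) ^ n) := by
  induction n with
  | zero =>
    simp only [pow_zero, one_mul, sub_self, ContinuousLinearMap.coe_zero]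
    exact isCompactOperator_zero
  | succ n ih =>
    have key : (1 : H →L[ℂ] H) - A ^ (n+1) * (adjoint A) ^ (n+1)
        = (1 - A * adjoint A) + A * ((1 : H →L[ℂ] H) - A ^ n * (adjoint A) ^ n) * adjoint A := by
      rw [pow_succ', pow_succ]; noncomm_ring
    rw [key]
    exact clm_add hA (compact_mul_left (compact_mul_right ih (adjoint A)) A)

lemma norm_pow_comp_tendsto {A K : H →L[ℂ] H}
    (hAn : ∀ x : H, Tendsto (fun n : ℕ => ‖((adjoint A) ^ n) x‖) atTop (𝓝 0))
    {M : ℝ} (hM0 : 0 ≤ M) (hM : ∀ n : ℕ, ‖(adjoint A) ^ n‖ ≤ M)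
    (hK : IsCompactOperator ⇑K) :
    Tendsto (fun n : ℕ => ‖(adjoint A) ^ n * K‖) atTop (𝓝 0) := by
  rw [Metric.tendsto_atTop]
  intro ε hε
  have hS : IsCompact (closure (⇑K '' Metric.closedBall (0:H) 1)) :=
    IsCompactOperator.isCompact_closure_image_closedBall
      (𝕜₁ := ℂ) (f := (K : H →ₗ[ℂ] H)) hK 1
  have hδ : (0:ℝ) < ε / (4 * (M + 1)) := by positivity
  obtain ⟨t, ht, hcov⟩ := totallyBounded_iff.mp hS.totallyBounded _ hδ
  have hN : ∀ᶠ n : ℕ in atTop, ∀ y ∈ t, ‖((adjoint A) ^ n) y‖ < ε / 4 := by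
    rw [eventually_all_finite ht]
    intro y _
    exact (hAn y).eventually (eventually_lt_nhds (by positivity : (0:ℝ) < ε/4)) |>.mono
      (fun n h => h)
  obtain ⟨N, hNall⟩ := eventually_atTop.mp hN
  refine ⟨N, fun n hn => ?_⟩
  have hball : ∀ x ∈ Metric.closedBall (0:H) 1, ‖((adjoint A) ^ n * K) x‖ ≤ ε/4 + ε/4 := by
    intro x hx
    have hKx : K x ∈ ⋃ y ∈ t, Metric.ball y (ε / (4 * (M + 1))) :=
      hcov (subset_closure (Set.mem_image_of_mem _ hx))
    obtain ⟨y, hyt, hy⟩ := Set.mem_iUnion₂.mp hKx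
    have hdist : ‖K x - y‖ < ε / (4 * (M + 1)) := by
      rw [← dist_eq_norm]; exact Metric.mem_ball.mp hy
    have h1 : ‖((adjoint A) ^ n) (K x - y)‖ ≤ M * (ε / (4 * (M + 1))) := by
      calc ‖((adjoint A) ^ n) (K x - y)‖ ≤ ‖(adjoint A) ^ n‖ * ‖K x - y‖ := le_opNorm _ _
        _ ≤ M * (ε / (4 * (M + 1))) :=
          mul_le_mul (hM n) hdist.le (norm_nonneg _) hM0
    have hM1 : M + 1 ≠ 0 := by positivity
    have h2 : M * (ε / (4 * (M + 1))) ≤ ε / 4 := by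
      have he : M * (ε / (4 * (M+1))) = M * ε / (4*(M+1)) := by ring
      rw [he, div_le_div_iff₀ (by positivity) (by norm_num)]
      nlinarith [hε.le, hM0]
    calc ‖((adjoint A) ^ n * K) x‖ = ‖((adjoint A) ^ n) (K x)‖ := by
          rw [ContinuousLinearMap.mul_apply]
      _ = ‖((adjoint A) ^ n) (K x - y) + ((adjoint A) ^ n) y‖ := by
          rw [← map_add, sub_add_cancel]
      _ ≤ ‖((adjoint A) ^ n) (K x - y)‖ + ‖((adjoint A) ^ n) y‖ := norm_add_le _ _
      _ ≤ ε/4 + ε/4 := add_le_add (h1.trans h2) (hNall n hn y hyt).le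
  have hop : ‖(adjoint A) ^ n * K‖ ≤ ε/4 + ε/4 := by
    refine ContinuousLinearMap.opNorm_le_bound _ (by positivity) (fun x => ?_)
    rcases eq_or_ne x 0 with rfl | hx
    · simp
    · have hxpos : (0:ℝ) < ‖x‖ := norm_pos_iff.mpr hx
      have hu : ((‖x‖:ℂ)⁻¹) • x ∈ Metric.closedBall (0:H) 1 := by
        simp only [Metric.mem_closedBall, dist_zero_right, norm_smul, norm_inv,
          Complex.norm_real, norm_norm]
        rw [inv_mul_cancel₀ hxpos.ne']
      have := hball _ hu
      rw [map_smul, norm_smul, norm_inv, Complex.norm_real, norm_norm] at this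
      calc ‖((adjoint A) ^ n * K) x‖ = ‖x‖ * (‖x‖⁻¹ * ‖((adjoint A) ^ n * K) x‖) := by
            field_simp
        _ ≤ ‖x‖ * (ε/4 + ε/4) := mul_le_mul_of_nonneg_left this hxpos.le
        _ = (ε/4 + ε/4) * ‖x‖ := by ring
  have hd : dist ‖(adjoint A) ^ n * K‖ 0 = ‖(adjoint A) ^ n * K‖ := by
    rw [dist_zero_right, Real.norm_of_nonneg (norm_nonneg _)]
  rw [hd]
  linarith

end Stmt3Aux

set_option maxHeartbeats 1000000 in
open Stmt3Aux in
/-- **Corollary 2.4.** Let `A ∈ B(H)` with `I - AA*` compact and `‖A*ⁿx‖ → 0` for all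
`x ∈ H`. Then `{A*ⁿTAⁿ}` converges in operator norm if and only if `T = T₀ + K` where
`A*T₀A = T₀` and `K` is compact. -/
theorem stmt_3 {H : Type*} [NormedAddCommGroup H] [InnerProductSpace ℂ H]
    [CompleteSpace H] [TopologicalSpace.SeparableSpace H]
    (hinf : ¬ FiniteDimensional ℂ H)
    (A T : H →L[ℂ] H)
    (hA : IsCompactOperator (⇑((1 : H →L[ℂ] H) - A * adjoint A)))
    (hAn : ∀ x : H, Tendsto (fun n : ℕ => ‖((adjoint A) ^ n) x‖) atTop (𝓝 0)) :
    (∃ L : H →L[ℂ] H, Tendsto (fun n : ℕ => (adjoint A) ^ n * T * A ^ n) atTop (𝓝 L)) ↔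
      (∃ T₀ K : H →L[ℂ] H, T = T₀ + K ∧ adjoint A * T₀ * A = T₀ ∧ IsCompactOperator ⇑K) := by
  obtain ⟨M, hM0, hMB, hMA⟩ := exists_bound A hAn
  constructor
  · rintro ⟨L, hL⟩
    -- A* L A = L
    have hBLA : adjoint A * L * A = L := by
      have h1 : Tendsto (fun n : ℕ => (adjoint A) ^ (n+1) * T * A ^ (n+1)) atTop (𝓝 L) :=
        hL.comp (tendsto_add_atTop_nat 1)
      have h2 : Tendsto (fun n : ℕ => adjoint A * ((adjoint A) ^ n * T * A ^ n) * A) atTop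
          (𝓝 (adjoint A * L * A)) :=
        (tendsto_const_nhds.mul hL).mul tendsto_const_nhds
      have h3 : (fun n : ℕ => adjoint A * ((adjoint A) ^ n * T * A ^ n) * A)
          = fun n : ℕ => (adjoint A) ^ (n+1) * T * A ^ (n+1) := by
        funext n; rw [pow_succ', pow_succ]; noncomm_ring
      rw [h3] at h2
      exact tendsto_nhds_unique h2 h1
    set D := T - L with hD
    -- ‖Bⁿ D Aⁿ‖ → 0
    have hDn : Tendsto (fun n : ℕ => ‖(adjoint A) ^ n * D * A ^ n‖) atTop (𝓝 0) := by
      have he : ∀ n : ℕ, (adjoint A) ^ n * D * A ^ n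
          = (adjoint A) ^ n * T * A ^ n - L := by
        intro n
        rw [hD]
        have : (adjoint A) ^ n * (T - L) * A ^ n
            = (adjoint A) ^ n * T * A ^ n - (adjoint A) ^ n * L * A ^ n := by noncomm_ring
        rw [this, invar_pow hBLA n]
      have h4 : Tendsto (fun n : ℕ => (adjoint A) ^ n * T * A ^ n - L) atTop (𝓝 (L - L)) :=
        hL.sub tendsto_const_nhds
      rw [sub_self] at h4
      have h5 : Tendsto (fun n : ℕ => (adjoint A) ^ n * D * A ^ n) atTop (𝓝 0) := by
        simpa only [← he] using h4
      simpa using h5.norm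
    -- the compact correction terms
    have hE : ∀ n : ℕ, IsCompactOperator
        ⇑(D - A ^ n * ((adjoint A) ^ n * D * A ^ n) * (adjoint A) ^ n) := by
      intro n
      have hCn := compact_one_sub_pow hA n
      have key : D - A ^ n * ((adjoint A) ^ n * D * A ^ n) * (adjoint A) ^ n
          = (1 - A ^ n * (adjoint A) ^ n) * D + D * (1 - A ^ n * (adjoint A) ^ n)
            - (1 - A ^ n * (adjoint A) ^ n) * D * (1 - A ^ n * (adjoint A) ^ n) := by
        noncomm_ring
      rw [key]
      exact clm_sub (clm_add (compact_mul_right hCn D) (compact_mul_left hCn D))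
        (compact_mul_right (compact_mul_right hCn D) _)
    -- the correction terms converge to D in norm
    have hconv : Tendsto
        (fun n : ℕ => D - A ^ n * ((adjoint A) ^ n * D * A ^ n) * (adjoint A) ^ n)
        atTop (𝓝 D) := by
      have hX : Tendsto (fun n : ℕ => A ^ n * ((adjoint A) ^ n * D * A ^ n) * (adjoint A) ^ n)
          atTop (𝓝 0) := by
        rw [tendsto_zero_iff_norm_tendsto_zero]
        refine squeeze_zero (fun n => norm_nonneg _)
          (g := fun n => M * ‖(adjoint A) ^ n * D * A ^ n‖ * M) (fun n => ?_) ?_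
        · calc ‖A ^ n * ((adjoint A) ^ n * D * A ^ n) * (adjoint A) ^ n‖
              ≤ ‖A ^ n * ((adjoint A) ^ n * D * A ^ n)‖ * ‖(adjoint A) ^ n‖ := norm_mul_le _ _
            _ ≤ ‖A ^ n‖ * ‖(adjoint A) ^ n * D * A ^ n‖ * ‖(adjoint A) ^ n‖ :=
              mul_le_mul_of_nonneg_right (norm_mul_le _ _) (norm_nonneg _)
            _ ≤ M * ‖(adjoint A) ^ n * D * A ^ n‖ * M := by
              apply mul_le_mul _ (hMB n) (norm_nonneg _)
                (mul_nonneg hM0 (norm_nonneg _))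
              exact mul_le_mul_of_nonneg_right (hMA n) (norm_nonneg _)
        · have := (tendsto_const_nhds (x := M)).mul hDn |>.mul (tendsto_const_nhds (x := M))
          simpa using this
      have := (tendsto_const_nhds (x := D)).sub hX
      simpa using this
    have hDcompact : IsCompactOperator ⇑D :=
      isCompactOperator_of_tendsto hconv (Filter.Eventually.of_forall hE)
    exact ⟨L, D, by rw [hD]; abel, hBLA, hDcompact⟩
  · rintro ⟨T₀, K, hTeq, hT₀, hK⟩
    refine ⟨T₀, ?_⟩
    have hfun : ∀ n : ℕ, (adjoint A) ^ n * T * A ^ n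
        = T₀ + (adjoint A) ^ n * K * A ^ n := by
      intro n
      rw [hTeq]
      have : (adjoint A) ^ n * (T₀ + K) * A ^ n
          = (adjoint A) ^ n * T₀ * A ^ n + (adjoint A) ^ n * K * A ^ n := by noncomm_ring
      rw [this, invar_pow hT₀ n]
    have hKn : Tendsto (fun n : ℕ => (adjoint A) ^ n * K * A ^ n) atTop (𝓝 0) := by
      rw [tendsto_zero_iff_norm_tendsto_zero]
      refine squeeze_zero (fun n => norm_nonneg _)
        (g := fun n => ‖(adjoint A) ^ n * K‖ * M) (fun n => ?_) ?_
      · calc ‖(adjoint A) ^ n * K * A ^ n‖ ≤ ‖(adjoint A) ^ n * K‖ * ‖A ^ n‖ := norm_mul_le _ _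
          _ ≤ ‖(adjoint A) ^ n * K‖ * M :=
            mul_le_mul_of_nonneg_left (hMA n) (norm_nonneg _)
      · have := (norm_pow_comp_tendsto hAn hM0 hMB hK).mul (tendsto_const_nhds (x := M))
        simpa using this
    have := (tendsto_const_nhds (x := T₀)).add hKn
    rw [add_zero] at this
    simpa only [← hfun] using this
end

section
/- Let A ∈ B(H) be such that I − AA* is compact and, for every x ∈ H, ‖Aⁿx‖ → 0 and ‖A*ⁿx‖ → 0 as n → ∞. Then for every T ∈ B(H) the following are equivalent: (a) the sequence {A*ⁿTAⁿ} converges in operator norm; (b) A*ⁿTAⁿ → 0 in operator norm; (c) T is a compact operator. -/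
open ContinuousLinearMap Filter Topology Metric Set

section Aux

variable {H : Type*} [NormedAddCommGroup H] [InnerProductSpace ℂ H] [CompleteSpace H]

lemma aux_mul_compact_left (f g : H →L[ℂ] H) (hf : IsCompactOperator ⇑f) :
    IsCompactOperator ⇑(f * g) := by
  have := hf.comp_clm g
  simpa [Function.comp_def] using this

lemma aux_mul_compact_right (f g : H →L[ℂ] H) (hg : IsCompactOperator ⇑g) :
    IsCompactOperator ⇑(f * g) := by
  have := hg.clm_comp f
  simpa [Function.comp_def] using this

lemma aux_norm_mul_compact_tendsto_zero {B : ℕ → H →L[ℂ] H} {M : ℝ}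
    (hM : ∀ n, ‖B n‖ ≤ M) (hB : ∀ x : H, Tendsto (fun n => ‖(B n) x‖) atTop (𝓝 0))
    {T : H →L[ℂ] H} (hT : IsCompactOperator ⇑T) :
    Tendsto (fun n => ‖B n * T‖) atTop (𝓝 0) := by
  have hM0 : 0 ≤ M := le_trans (norm_nonneg _) (hM 0)
  rw [NormedAddCommGroup.tendsto_atTop]
  intro ε hε
  set δ : ℝ := ε / (4 * (M + 1)) with hδdef
  have hδ : 0 < δ := by positivity
  obtain ⟨K, hK, hKsub⟩ :=
    (hT.image_closedBall_subset_compact 1 : ∃ K : Set H, IsCompact K ∧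
      ⇑(T : H →ₗ[ℂ] H) '' closedBall 0 1 ⊆ K)
  obtain ⟨t, htfin, htcov⟩ := (Metric.totallyBounded_iff.mp hK.totallyBounded) δ hδ
  -- eventually all centers are small
  have hev : ∀ᶠ n in atTop, ∀ y ∈ t, ‖(B n) y‖ < ε / 2 := by
    rw [eventually_all_finite htfin]
    intro y _
    have := (hB y).eventually_lt_const (by positivity : (0:ℝ) < ε / 2)
    simpa using this
  obtain ⟨N, hN⟩ := eventually_atTop.mp hev
  refine ⟨N, fun n hn' => ?_⟩
  have hn := hN n hn'
  rw [sub_zero, Real.norm_eq_abs, abs_of_nonneg (norm_nonneg _)]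
  have hbound : ‖B n * T‖ ≤ ε / 2 + M * δ := by
    apply opNorm_le_bound _ (by positivity)
    intro x
    rcases eq_or_ne x 0 with rfl | hx
    · simpa using mul_nonneg (by positivity : (0:ℝ) ≤ ε / 2 + M * δ) (norm_nonneg (0:H))
    · -- reduce to unit vector
      have hxn : (0:ℝ) < ‖x‖ := norm_pos_iff.mpr hx
      set u : H := ‖x‖⁻¹ • x with hu
      have hunorm : ‖u‖ = 1 := by
        rw [hu, norm_smul]
        simp [norm_inv, inv_mul_cancel₀ hxn.ne']
      have hmem : T u ∈ K := hKsub ⟨u, by simp [hunorm], rfl⟩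
      obtain ⟨y, hy, hdy⟩ : ∃ y ∈ t, T u ∈ ball y δ := by
        have := htcov hmem
        simpa using this
      have h1 : ‖(B n) (T u)‖ ≤ ‖(B n) (T u - y)‖ + ‖(B n) y‖ := by
        have heq : (B n) (T u) = (B n) (T u - y) + (B n) y := by
          rw [← map_add]
          congr 1
          abel
        rw [heq]
        exact norm_add_le _ _
      have h2 : ‖(B n) (T u - y)‖ ≤ M * δ := by
        calc ‖(B n) (T u - y)‖ ≤ ‖B n‖ * ‖T u - y‖ := le_opNorm _ _
        _ ≤ M * δ := by
            apply mul_le_mul (hM n) _ (norm_nonneg _) hM0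
            exact le_of_lt (by simpa [dist_eq_norm] using hdy)
      have hkey : ‖(B n * T) u‖ ≤ ε / 2 + M * δ := by
        have : ‖(B n) (T u)‖ ≤ ε / 2 + M * δ := by
          have := hn y hy
          linarith [h1, h2]
        simpa [ContinuousLinearMap.mul_apply] using this
      have hxu : (B n * T) x = ‖x‖ • (B n * T) u := by
        rw [hu, ContinuousLinearMap.map_smul_of_tower, smul_smul,
          mul_inv_cancel₀ hxn.ne', one_smul]
      calc ‖(B n * T) x‖ = ‖x‖ * ‖(B n * T) u‖ := by
            rw [hxu, norm_smul]; simp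
      _ ≤ (ε / 2 + M * δ) * ‖x‖ := by
            rw [mul_comm]
            exact mul_le_mul_of_nonneg_right hkey (norm_nonneg _)
  have : ε / 2 + M * δ < ε := by
    have h1 : M * δ ≤ (M + 1) * δ := by nlinarith
    have h2 : (M + 1) * δ ≤ ε / 4 := by
      rw [hδdef]
      rw [mul_div_assoc']
      rw [div_le_div_iff₀ (by positivity) (by norm_num)]
      ring_nf
      nlinarith
    linarith
  calc ‖B n * T‖ ≤ ε / 2 + M * δ := hbound
  _ < ε := this

lemma aux_compact_pow (A : H →L[ℂ] H)
    (hA : IsCompactOperator (⇑((1 : H →L[ℂ] H) - A * adjoint A))) (n : ℕ) :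
    IsCompactOperator ⇑((1 : H →L[ℂ] H) - A ^ n * (adjoint A) ^ n) := by
  induction n with
  | zero => simpa using (isCompactOperator_zero : IsCompactOperator (0 : H → H))
  | succ n ih =>
    have key : (1 : H →L[ℂ] H) - A ^ (n+1) * (adjoint A) ^ (n+1)
        = ((1 : H →L[ℂ] H) - A * adjoint A)
          + A * (((1 : H →L[ℂ] H) - A ^ n * (adjoint A) ^ n) * adjoint A) := by
      rw [pow_succ' A, pow_succ (adjoint A)]
      noncomm_ring
    rw [key]
    exact hA.add (aux_mul_compact_right A _
      (aux_mul_compact_left _ (adjoint A) ih))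

end Aux

set_option maxHeartbeats 1000000 in
/-- **Proposition 2.5.** Let `A ∈ B(H)` with `I - AA*` compact, `‖Aⁿx‖ → 0` and
`‖A*ⁿx‖ → 0` for all `x ∈ H`. For `T ∈ B(H)` the following are equivalent:
(a) `{A*ⁿTAⁿ}` converges in operator norm; (b) `A*ⁿTAⁿ → 0` in operator norm;
(c) `T` is compact. -/
theorem stmt_4 {H : Type*} [NormedAddCommGroup H] [InnerProductSpace ℂ H]
    [CompleteSpace H] [TopologicalSpace.SeparableSpace H]
    (hinf : ¬ FiniteDimensional ℂ H)
    (A T : H →L[ℂ] H)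
    (hA : IsCompactOperator (⇑((1 : H →L[ℂ] H) - A * adjoint A)))
    (hAn : ∀ x : H, Tendsto (fun n : ℕ => ‖(A ^ n) x‖) atTop (𝓝 0))
    (hAsn : ∀ x : H, Tendsto (fun n : ℕ => ‖((adjoint A) ^ n) x‖) atTop (𝓝 0)) :
    List.TFAE
      [∃ L : H →L[ℂ] H, Tendsto (fun n : ℕ => (adjoint A) ^ n * T * A ^ n) atTop (𝓝 L),
       Tendsto (fun n : ℕ => (adjoint A) ^ n * T * A ^ n) atTop (𝓝 0),
       IsCompactOperator ⇑T] := by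
  -- uniform bounds by Banach–Steinhaus
  obtain ⟨M₁, hM₁⟩ : ∃ C, ∀ n : ℕ, ‖A ^ n‖ ≤ C := by
    apply banach_steinhaus (g := fun n : ℕ => A ^ n)
    intro x
    obtain ⟨C, hC⟩ := (hAn x).bddAbove_range
    exact ⟨C, fun n => hC ⟨n, rfl⟩⟩
  obtain ⟨M₂, hM₂⟩ : ∃ C, ∀ n : ℕ, ‖(adjoint A) ^ n‖ ≤ C := by
    apply banach_steinhaus (g := fun n : ℕ => (adjoint A) ^ n)
    intro x
    obtain ⟨C, hC⟩ := (hAsn x).bddAbove_range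
    exact ⟨C, fun n => hC ⟨n, rfl⟩⟩
  set M : ℝ := max M₁ M₂ with hM
  have hMA : ∀ n : ℕ, ‖A ^ n‖ ≤ M := fun n => (hM₁ n).trans (le_max_left _ _)
  have hMAs : ∀ n : ℕ, ‖(adjoint A) ^ n‖ ≤ M := fun n => (hM₂ n).trans (le_max_right _ _)
  have hM0 : 0 ≤ M := le_trans (norm_nonneg _) (hMA 0)
  tfae_have 2 → 1 := fun h => ⟨0, h⟩
  tfae_have 1 → 2 := by
    rintro ⟨L, hL⟩
    -- L = 0 since the sequence tends to 0 pointwise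
    have hL0 : L = 0 := by
      ext x
      have h1 : Tendsto (fun n : ℕ => ((adjoint A) ^ n * T * A ^ n) x) atTop (𝓝 (L x)) := by
        exact ((ContinuousLinearMap.apply ℂ H x).continuous.tendsto L).comp hL
      have h2 : Tendsto (fun n : ℕ => ((adjoint A) ^ n * T * A ^ n) x) atTop (𝓝 0) := by
        rw [tendsto_zero_iff_norm_tendsto_zero]
        have hb : ∀ n : ℕ, ‖((adjoint A) ^ n * T * A ^ n) x‖ ≤ M * ‖T‖ * ‖(A ^ n) x‖ := by
          intro n
          calc ‖((adjoint A) ^ n) (T ((A ^ n) x))‖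
              ≤ ‖(adjoint A) ^ n‖ * ‖T ((A ^ n) x)‖ := le_opNorm _ _
          _ ≤ M * (‖T‖ * ‖(A ^ n) x‖) := by
              apply mul_le_mul (hMAs n) (le_opNorm _ _) (norm_nonneg _) hM0
          _ = M * ‖T‖ * ‖(A ^ n) x‖ := by ring
        apply squeeze_zero (fun n => norm_nonneg _) hb
        have := (hAn x).const_mul (M * ‖T‖)
        simpa using this
      simpa using tendsto_nhds_unique h1 h2
    rwa [hL0] at hL
  tfae_have 3 → 2 := by
    intro hT
    rw [NormedAddCommGroup.tendsto_atTop]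
    intro ε hε
    -- ‖A*ⁿ T Aⁿ‖ ≤ ‖A*ⁿ T‖ * M, and ‖A*ⁿ T‖ → 0 by compactness
    have h0 : Tendsto (fun n : ℕ => ‖(adjoint A) ^ n * T‖) atTop (𝓝 0) :=
      aux_norm_mul_compact_tendsto_zero hMAs hAsn hT
    have hev := (NormedAddCommGroup.tendsto_atTop.mp h0) (ε / (M + 1))
      (by positivity)
    obtain ⟨N, hN⟩ := hev
    refine ⟨N, fun n hn => ?_⟩
    have h1 : ‖(adjoint A) ^ n * T * A ^ n‖ ≤ ‖(adjoint A) ^ n * T‖ * ‖A ^ n‖ :=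
      norm_mul_le _ _
    have h2 : ‖(adjoint A) ^ n * T‖ < ε / (M + 1) := by
      have := hN n hn; simpa using this
    have h3 : ‖(adjoint A) ^ n * T‖ * ‖A ^ n‖ ≤ ‖(adjoint A) ^ n * T‖ * M :=
      mul_le_mul_of_nonneg_left (hMA n) (norm_nonneg _)
    have h4 : ‖(adjoint A) ^ n * T‖ * M < ε := by
      have hMlt : M < M + 1 := by linarith
      calc ‖(adjoint A) ^ n * T‖ * M ≤ ‖(adjoint A) ^ n * T‖ * (M + 1) :=
            mul_le_mul_of_nonneg_left (by linarith) (norm_nonneg _)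
      _ < (ε / (M + 1)) * (M + 1) := by
            apply mul_lt_mul_of_pos_right h2 (by positivity)
      _ = ε := div_mul_cancel₀ _ (by positivity)
    simpa using lt_of_le_of_lt (h1.trans h3) h4
  tfae_have 2 → 3 := by
    intro h2
    -- 1 - Aⁿ A*ⁿ is compact for every n
    have hKn : ∀ n : ℕ, IsCompactOperator ⇑((1 : H →L[ℂ] H) - A ^ n * (adjoint A) ^ n) :=
      aux_compact_pow A hA
    set E : ℕ → H →L[ℂ] H := fun n => (1 : H →L[ℂ] H) - A ^ n * (adjoint A) ^ n with hE
    -- Cₙ := T - Aⁿ A*ⁿ T Aⁿ A*ⁿ is compact and tends to T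
    have hmid : Tendsto (fun n : ℕ =>
        ‖A ^ n * ((adjoint A) ^ n * T * A ^ n) * (adjoint A) ^ n‖) atTop (𝓝 0) := by
      have hb : ∀ n : ℕ, ‖A ^ n * ((adjoint A) ^ n * T * A ^ n) * (adjoint A) ^ n‖
          ≤ M * ‖(adjoint A) ^ n * T * A ^ n‖ * M := by
        intro n
        calc ‖A ^ n * ((adjoint A) ^ n * T * A ^ n) * (adjoint A) ^ n‖
            ≤ ‖A ^ n * ((adjoint A) ^ n * T * A ^ n)‖ * ‖(adjoint A) ^ n‖ := norm_mul_le _ _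
        _ ≤ ‖A ^ n‖ * ‖(adjoint A) ^ n * T * A ^ n‖ * ‖(adjoint A) ^ n‖ :=
            mul_le_mul_of_nonneg_right (norm_mul_le _ _) (norm_nonneg _)
        _ ≤ M * ‖(adjoint A) ^ n * T * A ^ n‖ * M := by
            have h1 : ‖A ^ n‖ * ‖(adjoint A) ^ n * T * A ^ n‖
                ≤ M * ‖(adjoint A) ^ n * T * A ^ n‖ :=
              mul_le_mul_of_nonneg_right (hMA n) (norm_nonneg _)
            have h2 := mul_le_mul_of_nonneg_right h1 (norm_nonneg ((adjoint A) ^ n))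
            calc ‖A ^ n‖ * ‖(adjoint A) ^ n * T * A ^ n‖ * ‖(adjoint A) ^ n‖
                ≤ M * ‖(adjoint A) ^ n * T * A ^ n‖ * ‖(adjoint A) ^ n‖ := h2
            _ ≤ M * ‖(adjoint A) ^ n * T * A ^ n‖ * M :=
                mul_le_mul_of_nonneg_left (hMAs n)
                  (mul_nonneg hM0 (norm_nonneg _))
      apply squeeze_zero (fun n => norm_nonneg _) hb
      have h2' : Tendsto (fun n : ℕ => ‖(adjoint A) ^ n * T * A ^ n‖) atTop (𝓝 0) := by
        have := h2.norm
        simpa using this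
      have := (h2'.const_mul M).mul_const M
      simpa using this
    have hPTP : Tendsto
        (fun n : ℕ => ((1:H →L[ℂ] H) - E n) * T * ((1:H →L[ℂ] H) - E n)) atTop (𝓝 0) := by
      rw [tendsto_zero_iff_norm_tendsto_zero]
      convert hmid using 2 with n
      congr 1
      simp only [hE, sub_sub_cancel]
      noncomm_ring
    have hCT : Tendsto (fun n : ℕ =>
        T - ((1:H →L[ℂ] H) - E n) * T * ((1:H →L[ℂ] H) - E n)) atTop (𝓝 T) := by
      have h := Tendsto.sub
        (tendsto_const_nhds : Tendsto (fun _ : ℕ => T) atTop (𝓝 T)) hPTP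
      simpa using h
    refine isCompactOperator_of_tendsto hCT (Eventually.of_forall fun n => ?_)
    have hid : T - ((1:H →L[ℂ] H) - E n) * T * ((1:H →L[ℂ] H) - E n)
        = (E n * T + T * E n) - E n * T * E n := by noncomm_ring
    rw [hid]
    have hc1 : IsCompactOperator ⇑(E n * T) := aux_mul_compact_left _ T (hKn n)
    have hc2 : IsCompactOperator ⇑(T * E n) := aux_mul_compact_right T _ (hKn n)
    have hc3 : IsCompactOperator ⇑(E n * T * E n) := aux_mul_compact_right _ _ (hKn n)
    have := (hc1.add hc2).sub hc3
    simpa using this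
  tfae_finish
end

section
/- Let A ∈ B(H) be a contraction such that I − AA* is compact and ‖A*ⁿx‖ → 0 as n → ∞ for every x ∈ H. Then for every T ∈ B(H), lim_{n→∞} ‖A*ⁿTAⁿ‖ = ‖T + K(H)‖, the distance in operator norm from T to the ideal of compact operators. -/
open ContinuousLinearMap Filter Topology

open Metric Set

/-- **Corollary 2.8.** Let `A ∈ B(H)` be a contraction with `I - AA*` compact and
`‖A*ⁿx‖ → 0` for all `x ∈ H`. Then for every `T ∈ B(H)`,
`lim ‖A*ⁿTAⁿ‖ = ‖T + K(H)‖ = inf {‖T + K‖ : K compact}`. -/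
theorem stmt_7 {H : Type*} [NormedAddCommGroup H] [InnerProductSpace ℂ H]
    [CompleteSpace H] [TopologicalSpace.SeparableSpace H]
    (hinf : ¬ FiniteDimensional ℂ H)
    (A T : H →L[ℂ] H)
    (hAc : ‖A‖ ≤ 1)
    (hA : IsCompactOperator (⇑((1 : H →L[ℂ] H) - A * adjoint A)))
    (hAn : ∀ x : H, Tendsto (fun n : ℕ => ‖((adjoint A) ^ n) x‖) atTop (𝓝 0)) :
    Tendsto (fun n : ℕ => ‖(adjoint A) ^ n * T * A ^ n‖) atTop
      (𝓝 (sInf {r : ℝ | ∃ K : H →L[ℂ] H, IsCompactOperator ⇑K ∧ r = ‖T + K‖})) := by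
  set B := adjoint A with hB
  set S : Set ℝ := {r : ℝ | ∃ K : H →L[ℂ] H, IsCompactOperator ⇑K ∧ r = ‖T + K‖} with hSdef
  have hBc : ‖B‖ ≤ 1 := by
    rw [hB]; rw [show ‖(adjoint A : H →L[ℂ] H)‖ = ‖A‖ from LinearIsometryEquiv.norm_map _ _]
    exact hAc
  -- powers of contractions are contractions
  have hpow : ∀ (C : H →L[ℂ] H), ‖C‖ ≤ 1 → ∀ n : ℕ, ‖C ^ n‖ ≤ 1 := by
    intro C hC n
    induction n with
    | zero => simpa [ContinuousLinearMap.one_def] using ContinuousLinearMap.norm_id_le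
    | succ n ih =>
      rw [pow_succ]
      refine le_trans (norm_mul_le _ _) ?_
      nlinarith [norm_nonneg (C ^ n), norm_nonneg C]
  have hApow := hpow A hAc
  have hBpow := hpow B hBc
  have hSne : S.Nonempty := by
    refine ⟨‖T‖, 0, ?_, by simp⟩
    simpa [ContinuousLinearMap.coe_zero] using
      (isCompactOperator_zero : IsCompactOperator (0 : H → H))
  have hSb : BddBelow S := by
    refine ⟨0, fun r hr => ?_⟩
    obtain ⟨K, -, rfl⟩ := hr
    exact norm_nonneg _
  -- `A*B - 1` is compact
  have hAB : IsCompactOperator ⇑(A * B - 1) := by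
    have h1 : A * B - 1 = -(1 - A * B) := (neg_sub _ _).symm
    rw [h1, ContinuousLinearMap.coe_neg']
    exact hA.neg
  -- `AⁿBⁿ - 1` is compact
  have hX : ∀ n : ℕ, IsCompactOperator ⇑(A ^ n * B ^ n - 1) := by
    intro n
    induction n with
    | zero =>
      simpa [ContinuousLinearMap.coe_zero] using
        (isCompactOperator_zero : IsCompactOperator (0 : H → H))
    | succ n ih =>
      have heq : A ^ (n + 1) * B ^ (n + 1) - 1
          = A * (A ^ n * B ^ n - 1) * B + (A * B - 1) := by
        rw [pow_succ', pow_succ]; noncomm_ring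
      rw [heq, ContinuousLinearMap.coe_add']
      refine IsCompactOperator.add ?_ hAB
      exact (ih.clm_comp A).comp_clm B
  -- lower bound : sInf S ≤ ‖Bⁿ T Aⁿ‖
  have hd_le : ∀ n : ℕ, sInf S ≤ ‖B ^ n * T * A ^ n‖ := by
    intro n
    have hK : IsCompactOperator
        ⇑((A ^ n * B ^ n) * T * (A ^ n * B ^ n) - T) := by
      have heq : (A ^ n * B ^ n) * T * (A ^ n * B ^ n) - T
          = (A ^ n * B ^ n - 1) * (T * (A ^ n * B ^ n)) + T * (A ^ n * B ^ n - 1) := by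
        noncomm_ring
      rw [heq, ContinuousLinearMap.coe_add']
      exact ((hX n).comp_clm _).add ((hX n).clm_comp T)
    have hmem : ‖T + ((A ^ n * B ^ n) * T * (A ^ n * B ^ n) - T)‖ ∈ S := ⟨_, hK, rfl⟩
    refine le_trans (csInf_le hSb hmem) ?_
    have heq2 : T + ((A ^ n * B ^ n) * T * (A ^ n * B ^ n) - T)
        = A ^ n * (B ^ n * T * A ^ n) * B ^ n := by noncomm_ring
    rw [heq2]
    calc ‖A ^ n * (B ^ n * T * A ^ n) * B ^ n‖
        ≤ ‖A ^ n * (B ^ n * T * A ^ n)‖ * ‖B ^ n‖ := norm_mul_le _ _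
      _ ≤ ‖A ^ n‖ * ‖B ^ n * T * A ^ n‖ * ‖B ^ n‖ :=
          mul_le_mul_of_nonneg_right (norm_mul_le _ _) (norm_nonneg _)
      _ ≤ 1 * ‖B ^ n * T * A ^ n‖ * 1 := by
          gcongr
          · exact hApow n
          · exact hBpow n
      _ = ‖B ^ n * T * A ^ n‖ := by ring
  -- compact operators are annihilated by Bⁿ in norm
  have hKzero : ∀ K : H →L[ℂ] H, IsCompactOperator ⇑K →
      Tendsto (fun n : ℕ => ‖B ^ n * K‖) atTop (𝓝 0) := by
    intro K hK
    rw [Metric.tendsto_atTop]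
    intro ε hε
    have hK' : IsCompactOperator ⇑(K : H →ₗ[ℂ] H) := hK
    have hC : IsCompact (closure (⇑(K : H →ₗ[ℂ] H) '' closedBall (0 : H) 1)) :=
      hK'.isCompact_closure_image_closedBall (𝕜₁ := ℂ) 1
    obtain ⟨t, -, htfin, htcover⟩ := hC.finite_cover_balls (show (0:ℝ) < ε/3 by linarith)
    have hev : ∀ᶠ n : ℕ in atTop, ∀ c ∈ t, ‖(B ^ n) c‖ < ε / 3 := by
      rw [eventually_all_finite htfin]
      intro c _
      exact (hAn c).eventually_lt_const (by linarith)
    rw [eventually_atTop] at hev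
    obtain ⟨N, hN⟩ := hev
    refine ⟨N, fun n hn => ?_⟩
    have key : ∀ y : H, ‖y‖ ≤ 1 → ‖(B ^ n) (K y)‖ ≤ ε / 3 + ε / 3 := by
      intro y hy
      have hmem : K y ∈ closure (⇑(K : H →ₗ[ℂ] H) '' closedBall (0 : H) 1) :=
        subset_closure ⟨y, by simpa [mem_closedBall, dist_zero_right] using hy, rfl⟩
      obtain ⟨c, hct, hcy⟩ := mem_iUnion₂.1 (htcover hmem)
      have h1 : ‖K y - c‖ < ε / 3 := by rwa [mem_ball, dist_eq_norm] at hcy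
      have h2 : ‖(B ^ n) c‖ < ε / 3 := hN n hn c hct
      calc ‖(B ^ n) (K y)‖ = ‖(B ^ n) (K y - c) + (B ^ n) c‖ := by
            rw [map_sub, sub_add_cancel]
        _ ≤ ‖(B ^ n) (K y - c)‖ + ‖(B ^ n) c‖ := norm_add_le _ _
        _ ≤ ‖K y - c‖ + ‖(B ^ n) c‖ := by
            have := (B ^ n).le_opNorm (K y - c)
            nlinarith [hBpow n, norm_nonneg (K y - c)]
        _ ≤ ε / 3 + ε / 3 := by linarith
    have hop : ‖B ^ n * K‖ ≤ ε / 3 + ε / 3 := by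
      refine ContinuousLinearMap.opNorm_le_bound' _ (by linarith) fun x hx => ?_
      have hx0 : (0:ℝ) < ‖x‖ := lt_of_le_of_ne (norm_nonneg x) (Ne.symm hx)
      have hy1 : ‖(‖x‖⁻¹ : ℝ) • x‖ ≤ 1 := by
        rw [norm_smul, norm_inv, norm_norm, inv_mul_cancel₀ (ne_of_gt hx0)]
      have hkey := key ((‖x‖⁻¹ : ℝ) • x) hy1
      have heq : K ((‖x‖⁻¹ : ℝ) • x) = (‖x‖⁻¹ : ℝ) • K x :=
        K.map_smul_of_tower _ _
      rw [heq, map_smul_of_tower, norm_smul, norm_inv, norm_norm] at hkey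
      have := mul_le_mul_of_nonneg_left hkey (le_of_lt hx0)
      rw [← mul_assoc, mul_inv_cancel₀ (ne_of_gt hx0), one_mul] at this
      calc ‖(B ^ n * K) x‖ = ‖(B ^ n) (K x)‖ := rfl
        _ ≤ (ε / 3 + ε / 3) * ‖x‖ := by nlinarith
    rw [Real.dist_eq, sub_zero, abs_of_nonneg (norm_nonneg _)]
    linarith
  -- conclusion
  rw [Metric.tendsto_atTop]
  intro ε hε
  obtain ⟨r, ⟨K, hKc, hrK⟩, hr⟩ := exists_lt_of_csInf_lt hSne
    (lt_add_of_pos_right (sInf S) (show (0:ℝ) < ε/2 by linarith))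
  have hK0 := hKzero K hKc
  rw [Metric.tendsto_atTop] at hK0
  obtain ⟨N, hN⟩ := hK0 (ε/2) (by linarith)
  refine ⟨N, fun n hn => ?_⟩
  have h1 : sInf S ≤ ‖B ^ n * T * A ^ n‖ := hd_le n
  have h3 : ‖B ^ n * K‖ < ε / 2 := by
    have := hN n hn
    rwa [Real.dist_eq, sub_zero, abs_of_nonneg (norm_nonneg _)] at this
  have h2 : ‖B ^ n * T * A ^ n‖ ≤ ‖T + K‖ + ‖B ^ n * K‖ := by
    have heq : B ^ n * T * A ^ n = B ^ n * (T + K) * A ^ n - B ^ n * K * A ^ n := by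
      noncomm_ring
    rw [heq]
    refine le_trans (norm_sub_le _ _) ?_
    have e1 : ‖B ^ n * (T + K) * A ^ n‖ ≤ ‖T + K‖ := by
      calc ‖B ^ n * (T + K) * A ^ n‖ ≤ ‖B ^ n * (T + K)‖ * ‖A ^ n‖ := norm_mul_le _ _
        _ ≤ ‖B ^ n‖ * ‖T + K‖ * ‖A ^ n‖ :=
            mul_le_mul_of_nonneg_right (norm_mul_le _ _) (norm_nonneg _)
        _ ≤ 1 * ‖T + K‖ * 1 := by
            gcongr
            · exact hBpow n
            · exact hApow n
        _ = ‖T + K‖ := by ring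
    have e2 : ‖B ^ n * K * A ^ n‖ ≤ ‖B ^ n * K‖ := by
      calc ‖B ^ n * K * A ^ n‖ ≤ ‖B ^ n * K‖ * ‖A ^ n‖ := norm_mul_le _ _
        _ ≤ ‖B ^ n * K‖ := by
            nlinarith [hApow n, norm_nonneg (B ^ n * K)]
    linarith
  rw [Real.dist_eq, abs_of_nonneg (by linarith)]
  have : ‖T + K‖ < sInf S + ε / 2 := hrK ▸ hr
  linarith
end

section
/- Let A and B be contractions on H such that A and B* are essentially isometric, and assume that ‖Aⁿx‖ → 0 and ‖B*ⁿx‖ → 0 as n → ∞ for every x ∈ H. Let I_{A,B} = {T ∈ B(H) : ATB = T}. Then for every compact operator K on H one has dist(K, I_{A,B}) ≥ (1/2)‖K‖. Moreover, if AB = I this estimate is best possible: for a rank-one projection K = x⊗x with ‖x‖ = 1, taking T = −(1/2)I ∈ I_{A,B} gives ‖K + T‖ = 1/2. -/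
/-!
Iterating `A T B = T` gives `T = Aⁿ T Bⁿ`, so for contractions `‖T‖ ≤ ‖T - K‖ + ‖Aⁿ K‖`.
Strong convergence `Aⁿ → 0` is uniform on the relatively compact set `K (closedBall 0 1)`,
so `‖Aⁿ K‖ → 0`; hence `‖T‖ ≤ ‖K - T‖` and `‖K‖ ≤ 2 ‖K - T‖`.
For sharpness, `x ⊗ x - ½ I` is half the reflection in the line `ℂ x`, an isometry.
-/

open ContinuousLinearMap Filter Topology Metric

theorem pow_mul_mul_pow_eq {M : Type*} [Monoid M] {a b t : M} (h : a * t * b = t) :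
    ∀ n : ℕ, a ^ n * t * b ^ n = t
  | 0 => by simp
  | n + 1 => by
    calc a ^ (n + 1) * t * b ^ (n + 1) = a * (a ^ n * t * b ^ n) * b := by
          rw [pow_succ' a n, pow_succ b n]; simp only [mul_assoc]
      _ = t := by rw [pow_mul_mul_pow_eq h n, h]

section CompactOperator

variable {𝕜 E F G : Type*} [RCLike 𝕜]
  [NormedAddCommGroup E] [NormedSpace 𝕜 E] [NormedAddCommGroup F] [NormedSpace 𝕜 F]
  [NormedAddCommGroup G] [NormedSpace 𝕜 G]

theorem tendsto_comp_of_isCompactOperator {ι : Type*} {l : Filter ι} {A : ι → F →L[𝕜] G}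
    {C : ℝ} (hC : ∀ i, ‖A i‖ ≤ C) (hA : ∀ y, Tendsto (fun i => A i y) l (𝓝 0))
    {K : E →L[𝕜] F} (hK : IsCompactOperator K) :
    Tendsto (fun i => A i ∘L K) l (𝓝 0) := by
  refine NormedAddGroup.tendsto_nhds_zero.2 fun ε hε => ?_
  obtain ⟨δ, hδ, hCδ⟩ := exists_pos_mul_lt hε (C + 1)
  obtain ⟨S, hS, hKS⟩ := hK.image_closedBall_subset_compact 1
  obtain ⟨t, -, ht, hSt⟩ := hS.finite_cover_balls hδ
  filter_upwards [(eventually_all_finite ht).2 fun y _ =>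
    NormedAddGroup.tendsto_nhds_zero.1 (hA y) δ hδ] with i hi
  have hC0 : 0 ≤ C := (norm_nonneg _).trans (hC i)
  refine (opNorm_le_of_unit_norm (by positivity) fun w hw => ?_).trans_lt hCδ
  obtain ⟨y, hyt, hy⟩ := Set.mem_iUnion₂.1 (hSt (hKS ⟨w, by simp [hw], rfl⟩))
  rw [mem_ball_iff_norm] at hy
  calc ‖A i (K w)‖ = ‖A i (K w - y) + A i y‖ := by rw [← map_add, sub_add_cancel]
    _ ≤ ‖A i‖ * ‖K w - y‖ + ‖A i y‖ := (norm_add_le _ _).trans (by gcongr; exact le_opNorm _ _)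
    _ ≤ C * δ + δ := by gcongr; exacts [hC i, hy.le, (hi y hyt).le]
    _ = (C + 1) * δ := by ring

end CompactOperator

section FixedPoints

variable {𝕜 E : Type*} [NontriviallyNormedField 𝕜] [SeminormedAddCommGroup E] [NormedSpace 𝕜 E]

theorem ContinuousLinearMap.norm_pow_le_one {A : E →L[𝕜] E} (hA : ‖A‖ ≤ 1) :
    ∀ n : ℕ, ‖A ^ n‖ ≤ 1
  | 0 => norm_id_le
  | n + 1 => (norm_pow_le' A n.succ_pos).trans (pow_le_one₀ (norm_nonneg A) hA)

theorem ContinuousLinearMap.norm_le_norm_sub_of_mul_mul_eq {A B T K : E →L[𝕜] E}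
    (hA : ‖A‖ ≤ 1) (hB : ‖B‖ ≤ 1) (hT : A * T * B = T)
    (hK : Tendsto (fun n : ℕ => A ^ n * K) atTop (𝓝 0)) : ‖T‖ ≤ ‖T - K‖ := by
  have hbound (n : ℕ) : ‖T‖ ≤ ‖T - K‖ + ‖A ^ n * K‖ := by
    have hsplit : T = A ^ n * (T - K) * B ^ n + A ^ n * K * B ^ n := by
      rw [mul_sub, sub_mul, sub_add_cancel, pow_mul_mul_pow_eq hT]
    calc ‖T‖ ≤ ‖A ^ n‖ * ‖T - K‖ * ‖B ^ n‖ + ‖A ^ n * K‖ * ‖B ^ n‖ := by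
          nth_rw 1 [hsplit]
          refine (norm_add_le _ _).trans (add_le_add ?_ (norm_mul_le _ _))
          exact (norm_mul_le _ _).trans (by gcongr; exact norm_mul_le _ _)
      _ ≤ 1 * ‖T - K‖ * 1 + ‖A ^ n * K‖ * 1 := by
          gcongr <;> exact norm_pow_le_one ‹_› n
      _ = ‖T - K‖ + ‖A ^ n * K‖ := by ring
  refine ge_of_tendsto (x := atTop) ?_ (Eventually.of_forall hbound)
  simpa using tendsto_const_nhds.add (tendsto_norm_zero.comp hK)

end FixedPoints

theorem half_norm_le_infDist_setOf_mul_mul_eq {𝕜 E : Type*} [RCLike 𝕜] [NormedAddCommGroup E]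
    [NormedSpace 𝕜 E] {A B K : E →L[𝕜] E} (hA : ‖A‖ ≤ 1) (hB : ‖B‖ ≤ 1)
    (hAn : ∀ x, Tendsto (fun n : ℕ => (A ^ n) x) atTop (𝓝 0)) (hK : IsCompactOperator K) :
    1 / 2 * ‖K‖ ≤ infDist K {T : E →L[𝕜] E | A * T * B = T} := by
  refine (le_infDist ⟨0, by simp⟩).2 fun T hT => ?_
  have hT_le := norm_le_norm_sub_of_mul_mul_eq hA hB hT
    (tendsto_comp_of_isCompactOperator (norm_pow_le_one hA) hAn hK)
  rw [norm_sub_rev] at hT_le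
  rw [dist_eq_norm]
  linarith [norm_le_norm_sub_add K T]

theorem norm_rankOne_sub_half_smul_one {𝕜 E : Type*} [RCLike 𝕜] [NormedAddCommGroup E]
    [InnerProductSpace 𝕜 E] {x : E} (hx : ‖x‖ = 1) :
    ‖(innerSL 𝕜 x).smulRight x + -(1 / 2 : 𝕜) • (1 : E →L[𝕜] E)‖ = 1 / 2 := by
  have : Nontrivial E := ⟨⟨x, 0, norm_ne_zero_iff.1 (by simp [hx])⟩⟩
  have hrefl : (innerSL 𝕜 x).smulRight x + -(1 / 2 : 𝕜) • (1 : E →L[𝕜] E) =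
      (1 / 2 : 𝕜) • (Submodule.reflection (𝕜 ∙ x)).toLinearIsometry.toContinuousLinearMap := by
    ext y
    simp [Submodule.reflection_singleton_apply, hx]
    module
  rw [hrefl, norm_smul, LinearIsometry.norm_toContinuousLinearMap]
  norm_num

theorem stmt_8_general {H : Type*} [NormedAddCommGroup H] [InnerProductSpace ℂ H]
    (A B : H →L[ℂ] H)
    (hAc : ‖A‖ ≤ 1) (hBc : ‖B‖ ≤ 1)
    (hAn : ∀ x : H, Tendsto (fun n : ℕ => ‖(A ^ n) x‖) atTop (𝓝 0)) :
    (∀ K : H →L[ℂ] H, IsCompactOperator ⇑K →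
      (1 / 2) * ‖K‖ ≤ Metric.infDist K {T : H →L[ℂ] H | A * T * B = T}) ∧
    (A * B = 1 → ∀ x : H, ‖x‖ = 1 →
      A * (-(1 / 2 : ℂ) • (1 : H →L[ℂ] H)) * B = -(1 / 2 : ℂ) • (1 : H →L[ℂ] H) ∧
      ‖(innerSL ℂ x).smulRight x + -(1 / 2 : ℂ) • (1 : H →L[ℂ] H)‖ = 1 / 2) := by
  refine ⟨fun K hK => half_norm_le_infDist_setOf_mul_mul_eq hAc hBc
    (fun x => tendsto_zero_iff_norm_tendsto_zero.2 (hAn x)) hK,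
    fun hAB x hx => ⟨?_, norm_rankOne_sub_half_smul_one hx⟩⟩
  rw [mul_smul_comm, mul_one, smul_mul_assoc, hAB]

/-- **Proposition 2.9.** Let `A` and `B*` be essentially isometric contractions on `H`
with `‖Aⁿx‖ → 0` and `‖B*ⁿx‖ → 0` for all `x ∈ H`, and let
`I_{A,B} = {T : ATB = T}`. Then `dist(K, I_{A,B}) ≥ ‖K‖/2` for every compact `K`.
If moreover `AB = I`, the estimate is best possible: for `K = x ⊗ x` with `‖x‖ = 1`
and `T = -(1/2)I ∈ I_{A,B}` one has `‖K + T‖ = 1/2`. -/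
theorem stmt_8 {H : Type*} [NormedAddCommGroup H] [InnerProductSpace ℂ H]
    [CompleteSpace H] [TopologicalSpace.SeparableSpace H]
    (hinf : ¬ FiniteDimensional ℂ H)
    (A B : H →L[ℂ] H)
    (hAc : ‖A‖ ≤ 1) (hBc : ‖B‖ ≤ 1)
    (hA : IsCompactOperator (⇑((1 : H →L[ℂ] H) - adjoint A * A)))
    (hB : IsCompactOperator (⇑((1 : H →L[ℂ] H) - B * adjoint B)))
    (hAn : ∀ x : H, Tendsto (fun n : ℕ => ‖(A ^ n) x‖) atTop (𝓝 0))
    (hBn : ∀ x : H, Tendsto (fun n : ℕ => ‖((adjoint B) ^ n) x‖) atTop (𝓝 0)) :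
    (∀ K : H →L[ℂ] H, IsCompactOperator ⇑K →
      (1 / 2) * ‖K‖ ≤ Metric.infDist K {T : H →L[ℂ] H | A * T * B = T}) ∧
    (A * B = 1 → ∀ x : H, ‖x‖ = 1 →
      A * (-(1 / 2 : ℂ) • (1 : H →L[ℂ] H)) * B = -(1 / 2 : ℂ) • (1 : H →L[ℂ] H) ∧
      ‖(innerSL ℂ x).smulRight x + -(1 / 2 : ℂ) • (1 : H →L[ℂ] H)‖ = 1 / 2) :=
  stmt_8_general A B hAc hBc hAn
end

section
/- Let A, B ∈ B(X) be operators on a complex Banach space X such that sup_{n≥0} (‖Aⁿ‖·‖Bⁿ‖) < ∞, and let T ∈ B(X). Then the sequence {(1/n) Σ_{i=0}^{n−1} AⁱTBⁱ} converges in operator norm if and only if T admits a decomposition T = T₀ + Q with T₀, Q ∈ B(X), where ‖(1/n) Σ_{i=0}^{n−1} AⁱT₀Bⁱ‖ → 0 as n → ∞ and AQB = Q. -/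
open Filter Topology

private lemma stmt11_conj_pow {X : Type*} [NormedAddCommGroup X] [NormedSpace ℂ X]
    (A B Q : X →L[ℂ] X) (hQ : A * Q * B = Q) : ∀ i : ℕ, A ^ i * Q * B ^ i = Q := by
  intro i
  induction i with
  | zero => simp
  | succ n ih =>
    have h : A ^ (n + 1) * Q * B ^ (n + 1) = A ^ n * (A * Q * B) * B ^ n := by
      rw [pow_succ A, pow_succ' B]
      simp [mul_assoc]
    rw [h, hQ, ih]

set_option maxHeartbeats 1600000 in
/-- **Corollary 4.2.** Let `A, B ∈ B(X)` with `sup_n ‖Aⁿ‖·‖Bⁿ‖ < ∞` and `T ∈ B(X)`.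
Then the sequence of averages `{(1/n) Σ_{i<n} AⁱTBⁱ}` converges in operator norm if
and only if `T = T₀ + Q` where `‖(1/n) Σ_{i<n} AⁱT₀Bⁱ‖ → 0` and `AQB = Q`. -/
theorem stmt_11 {X : Type*} [NormedAddCommGroup X] [NormedSpace ℂ X] [CompleteSpace X]
    (A B T : X →L[ℂ] X)
    (hbdd : ∃ C : ℝ, ∀ n : ℕ, ‖A ^ n‖ * ‖B ^ n‖ ≤ C) :
    (∃ L : X →L[ℂ] X,
        Tendsto (fun n : ℕ => (n : ℝ)⁻¹ • ∑ i ∈ Finset.range n, A ^ i * T * B ^ i)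
          atTop (𝓝 L)) ↔
      (∃ T₀ Q : X →L[ℂ] X, T = T₀ + Q ∧
        Tendsto (fun n : ℕ => ‖(n : ℝ)⁻¹ • ∑ i ∈ Finset.range n, A ^ i * T₀ * B ^ i‖)
          atTop (𝓝 0) ∧
        A * Q * B = Q) := by
  constructor
  · rintro ⟨L, hL⟩
    obtain ⟨C, hC⟩ := hbdd
    set M : ℕ → (X →L[ℂ] X) :=
      fun n => (n : ℝ)⁻¹ • ∑ i ∈ Finset.range n, A ^ i * T * B ^ i with hM
    -- step 1: A * M n * B = M n + (1/n) • (AⁿTBⁿ - T)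
    have key : ∀ n : ℕ, A * M n * B = M n + (n : ℝ)⁻¹ • (A ^ n * T * B ^ n - T) := by
      intro n
      have h1 : A * M n * B = (n : ℝ)⁻¹ • ∑ i ∈ Finset.range n,
          A ^ (i + 1) * T * B ^ (i + 1) := by
        rw [hM]
        simp only [mul_smul_comm, smul_mul_assoc]
        congr 1
        rw [Finset.mul_sum, Finset.sum_mul]
        refine Finset.sum_congr rfl fun i _ => ?_
        rw [pow_succ' A, pow_succ B]
        simp [mul_assoc]
      have e1 := Finset.sum_range_succ' (fun i => A ^ i * T * B ^ i) n
      have e2 := Finset.sum_range_succ (fun i => A ^ i * T * B ^ i) n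
      have e3 : (∑ i ∈ Finset.range n, A ^ (i + 1) * T * B ^ (i + 1)) + T
          = (∑ i ∈ Finset.range n, A ^ i * T * B ^ i) + A ^ n * T * B ^ n := by
        simpa using e1.symm.trans e2
      have h2 : ∑ i ∈ Finset.range n, A ^ (i + 1) * T * B ^ (i + 1)
          = (∑ i ∈ Finset.range n, A ^ i * T * B ^ i) + (A ^ n * T * B ^ n - T) := by
        calc ∑ i ∈ Finset.range n, A ^ (i + 1) * T * B ^ (i + 1)
            = ((∑ i ∈ Finset.range n, A ^ (i + 1) * T * B ^ (i + 1)) + T) - T := by abel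
          _ = ((∑ i ∈ Finset.range n, A ^ i * T * B ^ i) + A ^ n * T * B ^ n) - T := by
              rw [e3]
          _ = (∑ i ∈ Finset.range n, A ^ i * T * B ^ i) + (A ^ n * T * B ^ n - T) := by abel
      rw [h1, h2, smul_add, hM]
    -- the error term tends to 0
    have hD : Tendsto (fun n : ℕ => (n : ℝ)⁻¹ • (A ^ n * T * B ^ n - T)) atTop
        (𝓝 0) := by
      apply squeeze_zero_norm (a := fun n : ℕ => (n : ℝ)⁻¹ * (C * ‖T‖ + ‖T‖))
      · intro n
        have hb : ‖A ^ n * T * B ^ n - T‖ ≤ C * ‖T‖ + ‖T‖ := by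
          refine le_trans (norm_sub_le _ _) (add_le_add ?_ le_rfl)
          calc ‖A ^ n * T * B ^ n‖ ≤ ‖A ^ n * T‖ * ‖B ^ n‖ := norm_mul_le _ _
            _ ≤ ‖A ^ n‖ * ‖T‖ * ‖B ^ n‖ := by
                gcongr; exact norm_mul_le _ _
            _ = ‖A ^ n‖ * ‖B ^ n‖ * ‖T‖ := by ring
            _ ≤ C * ‖T‖ := by gcongr; exact hC n
        calc ‖(n : ℝ)⁻¹ • (A ^ n * T * B ^ n - T)‖
            ≤ ‖(n : ℝ)⁻¹‖ * ‖A ^ n * T * B ^ n - T‖ := ContinuousLinearMap.opNorm_smul_le _ _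
          _ ≤ ‖(n : ℝ)⁻¹‖ * (C * ‖T‖ + ‖T‖) := by gcongr
          _ = (n : ℝ)⁻¹ * (C * ‖T‖ + ‖T‖) := by
              rw [Real.norm_eq_abs, abs_of_nonneg (by positivity)]
      · simpa using (tendsto_inv_atTop_nhds_zero_nat).mul_const (C * ‖T‖ + ‖T‖)
    -- A L B = L
    have hALB : A * L * B = L := by
      have t1 : Tendsto (fun n => A * M n * B) atTop (𝓝 (A * L * B)) :=
        (tendsto_const_nhds.mul hL).mul tendsto_const_nhds
      have t2 : Tendsto (fun n => A * M n * B) atTop (𝓝 L) := by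
        simp only [key]
        simpa using hL.add hD
      exact tendsto_nhds_unique t1 t2
    refine ⟨T - L, L, by abel, ?_, hALB⟩
    have heq : ∀ n : ℕ, 1 ≤ n →
        (n : ℝ)⁻¹ • ∑ i ∈ Finset.range n, A ^ i * (T - L) * B ^ i = M n - L := by
      intro n hn
      have hn0 : (n : ℝ) ≠ 0 := Nat.cast_ne_zero.mpr (by omega)
      have hsum : ∑ i ∈ Finset.range n, A ^ i * (T - L) * B ^ i
          = (∑ i ∈ Finset.range n, A ^ i * T * B ^ i) - n • L := by
        calc ∑ i ∈ Finset.range n, A ^ i * (T - L) * B ^ i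
            = ∑ i ∈ Finset.range n, (A ^ i * T * B ^ i - L) :=
              Finset.sum_congr rfl fun i _ => by
                rw [mul_sub, sub_mul, stmt11_conj_pow A B L hALB i]
          _ = (∑ i ∈ Finset.range n, A ^ i * T * B ^ i) - n • L := by
              rw [Finset.sum_sub_distrib, Finset.sum_const, Finset.card_range]
      rw [hsum, smul_sub]
      congr 1
      rw [← Nat.cast_smul_eq_nsmul ℝ n L, smul_smul, inv_mul_cancel₀ hn0, one_smul]
    have hnorm : Tendsto (fun n => ‖M n - L‖) atTop (𝓝 0) := by
      rw [← tendsto_zero_iff_norm_tendsto_zero]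
      simpa using hL.sub (tendsto_const_nhds : Tendsto (fun _ : ℕ => L) atTop (𝓝 L))
    apply hnorm.congr'
    filter_upwards [eventually_ge_atTop 1] with n hn
    exact congrArg norm (heq n hn).symm
  · rintro ⟨T₀, Q, hT, h0, hQ⟩
    refine ⟨Q, ?_⟩
    have heq : ∀ n : ℕ, 1 ≤ n →
        (n : ℝ)⁻¹ • ∑ i ∈ Finset.range n, A ^ i * T * B ^ i
          = ((n : ℝ)⁻¹ • ∑ i ∈ Finset.range n, A ^ i * T₀ * B ^ i) + Q := by
      intro n hn
      have hn0 : (n : ℝ) ≠ 0 := Nat.cast_ne_zero.mpr (by omega)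
      have hsum : ∑ i ∈ Finset.range n, A ^ i * T * B ^ i
          = (∑ i ∈ Finset.range n, A ^ i * T₀ * B ^ i) + n • Q := by
        calc ∑ i ∈ Finset.range n, A ^ i * T * B ^ i
            = ∑ i ∈ Finset.range n, (A ^ i * T₀ * B ^ i + Q) :=
              Finset.sum_congr rfl fun i _ => by
                rw [hT, mul_add, add_mul, stmt11_conj_pow A B Q hQ i]
          _ = (∑ i ∈ Finset.range n, A ^ i * T₀ * B ^ i) + n • Q := by
              rw [Finset.sum_add_distrib, Finset.sum_const, Finset.card_range]
      rw [hsum, smul_add]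
      congr 1
      rw [← Nat.cast_smul_eq_nsmul ℝ n Q, smul_smul, inv_mul_cancel₀ hn0, one_smul]
    have h0' : Tendsto (fun n : ℕ => (n : ℝ)⁻¹ • ∑ i ∈ Finset.range n, A ^ i * T₀ * B ^ i)
        atTop (𝓝 0) := tendsto_zero_iff_norm_tendsto_zero.mpr h0
    have hlim : Tendsto (fun n : ℕ =>
        ((n : ℝ)⁻¹ • ∑ i ∈ Finset.range n, A ^ i * T₀ * B ^ i) + Q) atTop (𝓝 Q) := by
      simpa using h0'.add (tendsto_const_nhds : Tendsto (fun _ : ℕ => Q) atTop (𝓝 Q))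
    apply hlim.congr'
    filter_upwards [eventually_ge_atTop 1] with n hn
    exact (heq n hn).symm
end

section
/- Let T ∈ B(X) be a power bounded operator on a complex Banach space X, and let x ∈ X satisfy ‖T^{n+1}x − Tⁿx‖ → 0 as n → ∞. If the sequence of Cesàro averages {(1/n) Σ_{i=0}^{n−1} Tⁱx} converges strongly to some y ∈ X, then the sequence {Tⁿx} also converges strongly to y. -/
open Filter Topology

/-- **Lemma 4.3 (a).** Let `T ∈ B(X)` be power bounded and `x ∈ X` with
`‖T^{n+1}x − Tⁿx‖ → 0`. If the Cesàro averages `(1/n) Σ_{i<n} Tⁱx` converge strongly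
to `y`, then `Tⁿx → y` strongly as well. -/
theorem stmt_12 {X : Type*} [NormedAddCommGroup X] [NormedSpace ℂ X] [CompleteSpace X]
    (T : X →L[ℂ] X) (hpb : ∃ C : ℝ, ∀ n : ℕ, ‖T ^ n‖ ≤ C)
    (x : X) (hdiff : Tendsto (fun n : ℕ => ‖(T ^ (n + 1)) x - (T ^ n) x‖) atTop (𝓝 0))
    (y : X)
    (hces : Tendsto (fun n : ℕ => (n : ℝ)⁻¹ • ∑ i ∈ Finset.range n, (T ^ i) x)
      atTop (𝓝 y)) :
    Tendsto (fun n : ℕ => (T ^ n) x) atTop (𝓝 y) := by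
  obtain ⟨C, hC⟩ := hpb
  set C' : ℝ := max C 1 with hC'def
  have hC'pos : (0:ℝ) < C' := lt_of_lt_of_le one_pos (le_max_right _ _)
  have hC' : ∀ n : ℕ, ‖T ^ n‖ ≤ C' := fun n => (hC n).trans (le_max_left _ _)
  set A : ℕ → X := fun n => (n : ℝ)⁻¹ • ∑ i ∈ Finset.range n, (T ^ i) x with hA
  -- Step 1: T y = y
  have hTA : ∀ n : ℕ, T (A n) = A n + (n : ℝ)⁻¹ • ((T ^ n) x - x) := by
    intro n
    have h1 : T (A n) = (n : ℝ)⁻¹ • ∑ i ∈ Finset.range n, (T ^ (i + 1)) x := by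
      simp only [hA, ContinuousLinearMap.map_smul_of_tower, map_sum]
      congr 1
      refine Finset.sum_congr rfl fun i _ => ?_
      rw [pow_succ', ContinuousLinearMap.mul_apply]
    rw [h1]
    have h2 : ∑ i ∈ Finset.range n, (T ^ (i + 1)) x
        = ∑ i ∈ Finset.range n, (T ^ i) x + ((T ^ n) x - x) := by
      have := Finset.sum_range_succ' (fun i => (T ^ i) x) n
      have h3 := Finset.sum_range_succ (fun i => (T ^ i) x) n
      rw [h3] at this
      simp only [pow_zero, ContinuousLinearMap.one_apply] at this
      -- this : ∑ i ∈ range n, T^i x + T^n x = ∑ i ∈ range n, T^(i+1) x + x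
      linear_combination (norm := abel) this.symm
    rw [h2, smul_add]
  have herr : Tendsto (fun n : ℕ => (n : ℝ)⁻¹ • ((T ^ n) x - x)) atTop (𝓝 0) := by
    refine squeeze_zero_norm (a := fun n : ℕ => (n : ℝ)⁻¹ * (C' * ‖x‖ + ‖x‖))
      (fun n => ?_) ?_
    · 
      rw [norm_smul, norm_inv, Real.norm_natCast]
      refine mul_le_mul_of_nonneg_left ?_ (by positivity)
      calc ‖(T ^ n) x - x‖ ≤ ‖(T ^ n) x‖ + ‖x‖ := norm_sub_le _ _
        _ ≤ C' * ‖x‖ + ‖x‖ := by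
            gcongr
            exact (T ^ n).le_opNorm x |>.trans
              (mul_le_mul_of_nonneg_right (hC' n) (norm_nonneg x))
    · have h0 : Tendsto (fun n : ℕ => ((n : ℝ))⁻¹) atTop (𝓝 0) :=
        tendsto_inv_atTop_zero.comp tendsto_natCast_atTop_atTop
      have := h0.mul_const (C' * ‖x‖ + ‖x‖)
      simpa using this
  have hTy : T y = y := by
    have h1 : Tendsto (fun n : ℕ => T (A n)) atTop (𝓝 (T y)) :=
      (T.continuous.tendsto y).comp hces
    have h2 : Tendsto (fun n : ℕ => T (A n)) atTop (𝓝 (y + 0)) := by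
      simp only [hTA]
      exact hces.add herr
    rw [add_zero] at h2
    exact tendsto_nhds_unique h1 h2
  have hTky : ∀ k : ℕ, (T ^ k) y = y := by
    intro k
    induction k with
    | zero => simp
    | succ k ih => rw [pow_succ', ContinuousLinearMap.mul_apply, ih, hTy]
  -- Step 2: main estimate
  rw [Metric.tendsto_atTop]
  intro ε hε
  -- choose m with ‖A m - y‖ < ε / (2 C')
  obtain ⟨N₁, hN₁⟩ := Metric.tendsto_atTop.mp hces (ε / (2 * C')) (by positivity)
  set m : ℕ := max N₁ 1 with hmdef
  have hm1 : 1 ≤ m := le_max_right _ _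
  have hmR : (0:ℝ) < (m:ℝ) := by exact_mod_cast hm1
  have hAm : ‖A m - y‖ < ε / (2 * C') := by
    have := hN₁ m (le_max_left _ _)
    rwa [dist_eq_norm] at this
  -- choose N₀ from hdiff
  obtain ⟨N₀, hN₀⟩ := Metric.tendsto_atTop.mp hdiff (ε / (2 * m)) (by positivity)
  have hd : ∀ j ≥ N₀, ‖(T ^ (j + 1)) x - (T ^ j) x‖ ≤ ε / (2 * m) := by
    intro j hj
    have := hN₀ j hj
    rw [Real.dist_eq, sub_zero] at this
    exact (le_abs_self _).trans this.le
  refine ⟨N₀ + m, fun n hn => ?_⟩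
  set k : ℕ := n - m with hkdef
  have hmn : m ≤ n := le_trans (Nat.le_add_left m N₀) hn
  have hkN₀ : N₀ ≤ k := by omega
  have hnkm : n = k + m := by omega
  rw [dist_eq_norm]
  -- decomposition
  have hdecomp : (T ^ n) x - y = ((T ^ n) x - (T ^ k) (A m)) + (T ^ k) (A m - y) := by
    rw [map_sub, hTky k]; abel
  have hterm2 : ‖(T ^ k) (A m - y)‖ < ε / 2 := by
    calc ‖(T ^ k) (A m - y)‖ ≤ ‖T ^ k‖ * ‖A m - y‖ := (T ^ k).le_opNorm _
      _ ≤ C' * ‖A m - y‖ := mul_le_mul_of_nonneg_right (hC' k) (norm_nonneg _)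
      _ < C' * (ε / (2 * C')) := by exact mul_lt_mul_of_pos_left hAm hC'pos
      _ = ε / 2 := by field_simp
  have hterm1 : ‖(T ^ n) x - (T ^ k) (A m)‖ ≤ ε / 2 := by
    have hTkA : (T ^ k) (A m) = (m : ℝ)⁻¹ • ∑ i ∈ Finset.range m, (T ^ (k + i)) x := by
      simp only [hA, ContinuousLinearMap.map_smul_of_tower, map_sum]
      congr 1
      refine Finset.sum_congr rfl fun i _ => ?_
      rw [pow_add, ContinuousLinearMap.mul_apply]
    have hTn : (T ^ n) x = (m : ℝ)⁻¹ • ∑ _i ∈ Finset.range m, (T ^ n) x := by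
      rw [Finset.sum_const, Finset.card_range, ← Nat.cast_smul_eq_nsmul ℝ, smul_smul,
        inv_mul_cancel₀ hmR.ne', one_smul]
    rw [hTkA]
    nth_rewrite 1 [hTn]
    rw [← smul_sub, ← Finset.sum_sub_distrib, norm_smul, norm_inv, Real.norm_natCast]
    have hinner : ∀ i ∈ Finset.range m, ‖(T ^ n) x - (T ^ (k + i)) x‖ ≤ ε / 2 := by
      intro i hi
      rw [Finset.mem_range] at hi
      have htel : (T ^ n) x - (T ^ (k + i)) x
          = ∑ j ∈ Finset.Ico i m, ((T ^ (k + (j + 1))) x - (T ^ (k + j)) x) := by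
        rw [Finset.sum_Ico_eq_sub _ hi.le, Finset.sum_range_sub (fun j => (T ^ (k + j)) x),
          Finset.sum_range_sub (fun j => (T ^ (k + j)) x), hnkm]
        abel
      rw [htel]
      calc ‖∑ j ∈ Finset.Ico i m, ((T ^ (k + (j + 1))) x - (T ^ (k + j)) x)‖
          ≤ ∑ j ∈ Finset.Ico i m, ‖(T ^ (k + (j + 1))) x - (T ^ (k + j)) x‖ :=
            norm_sum_le _ _
        _ ≤ ∑ _j ∈ Finset.Ico i m, (ε / (2 * m)) := by
            refine Finset.sum_le_sum fun j _ => ?_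
            have : k + (j + 1) = (k + j) + 1 := by ring
            rw [this]
            exact hd (k + j) (le_trans hkN₀ (Nat.le_add_right k j))
        _ = (m - i : ℕ) * (ε / (2 * m)) := by
            rw [Finset.sum_const, Nat.card_Ico, nsmul_eq_mul]
        _ ≤ (m : ℝ) * (ε / (2 * m)) := by
            refine mul_le_mul_of_nonneg_right ?_ (by positivity)
            exact_mod_cast Nat.sub_le m i
        _ = ε / 2 := by field_simp
    calc (m : ℝ)⁻¹ * ‖∑ i ∈ Finset.range m, ((T ^ n) x - (T ^ (k + i)) x)‖
        ≤ (m : ℝ)⁻¹ * ∑ i ∈ Finset.range m, ‖(T ^ n) x - (T ^ (k + i)) x‖ := by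
          refine mul_le_mul_of_nonneg_left (norm_sum_le _ _) (by positivity)
      _ ≤ (m : ℝ)⁻¹ * ∑ _i ∈ Finset.range m, (ε / 2) := by
          refine mul_le_mul_of_nonneg_left (Finset.sum_le_sum hinner) (by positivity)
      _ = ε / 2 := by
          rw [Finset.sum_const, Finset.card_range, nsmul_eq_mul]
          field_simp
  calc ‖(T ^ n) x - y‖
      = ‖((T ^ n) x - (T ^ k) (A m)) + (T ^ k) (A m - y)‖ := by rw [← hdecomp]
    _ ≤ ‖(T ^ n) x - (T ^ k) (A m)‖ + ‖(T ^ k) (A m - y)‖ := norm_add_le _ _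
    _ < ε / 2 + ε / 2 := by exact add_lt_add_of_le_of_lt hterm1 hterm2
    _ = ε := by ring
end

section
/- Let T ∈ B(X) be a power bounded operator on a reflexive complex Banach space X, and let x ∈ X satisfy ‖T^{n+1}x − Tⁿx‖ → 0 as n → ∞. Then the sequence {Tⁿx} converges strongly in X. -/
/-!
The increments `Tᵏx - Tᵏ⁺¹x` are sent to `0` by the powers of `T`, and since `T` is power
bounded the vectors `z` with `Tⁿz → 0` form a closed subspace; so `Tⁿz → 0` on the closed span
`M` of the increments. By reflexivity and Banach–Alaoglu the bounded orbit `(Tⁿx)` has a weak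
cluster point `y`. For every functional `f`, `f (Ty - y)` is a cluster point of
`f (Tⁿ⁺¹x - Tⁿx) → 0`, so `Ty = y`; and every functional vanishing on `M` is constant along the
orbit, so `x - y ∈ M` by Hahn–Banach. Hence `Tⁿx = Tⁿ(x - y) + y → y`.
-/

open Filter Topology Bornology

namespace ContinuousLinearMap

section NontriviallyNormedField

variable {𝕜 E : Type*} [NontriviallyNormedField 𝕜] [NormedAddCommGroup E] [NormedSpace 𝕜 E]

def stableSubmodule (T : E →L[𝕜] E) : Submodule 𝕜 E where
  carrier := {z | Tendsto (fun n => (T ^ n) z) atTop (𝓝 0)}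
  add_mem' {a b} ha hb := by simpa only [Set.mem_ofPred_eq, map_add, add_zero] using ha.add hb
  zero_mem' := by simp only [Set.mem_ofPred_eq, map_zero, tendsto_const_nhds]
  smul_mem' c a ha := by simpa only [Set.mem_ofPred_eq, map_smul, smul_zero] using ha.const_smul c

theorem sub_pow_apply_mem_span_range (T : E →L[𝕜] E) (x : E) (n : ℕ) :
    x - (T ^ n) x ∈ Submodule.span 𝕜 (Set.range fun k : ℕ => (T ^ k) x - (T ^ (k + 1)) x) := by
  have htelescope := Finset.sum_range_sub' (fun k => (T ^ k) x) n
  rw [pow_zero, one_apply_eq_self] at htelescope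
  rw [← htelescope]
  exact Submodule.sum_mem _ fun k _ => Submodule.subset_span ⟨k, rfl⟩

theorem isBounded_range_pow_apply {T : E →L[𝕜] E} (hT : ∃ C, ∀ n : ℕ, ‖T ^ n‖ ≤ C) (x : E) :
    IsBounded (Set.range fun n : ℕ => (T ^ n) x) := by
  obtain ⟨C, hC⟩ := hT
  exact isBounded_iff_forall_norm_le.mpr
    ⟨C * ‖x‖, Set.forall_mem_range.mpr fun n => (T ^ n).le_of_opNorm_le (hC n) x⟩

variable {T : E →L[𝕜] E} {x y : E}

theorem isClosed_stableSubmodule (hT : ∃ C, ∀ n : ℕ, ‖T ^ n‖ ≤ C) :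
    IsClosed (T.stableSubmodule : Set E) := by
  have hequi : Equicontinuous fun n : ℕ => ⇑(T ^ n) :=
    ((NormedSpace.equicontinuous_TFAE fun n : ℕ => T ^ n).out 5 1).mp hT
  exact hequi.isClosed_setOfPred_tendsto continuous_const

theorem span_range_pow_sub_le_stableSubmodule
    (hx : Tendsto (fun n : ℕ => (T ^ (n + 1)) x - (T ^ n) x) atTop (𝓝 0)) :
    Submodule.span 𝕜 (Set.range fun k : ℕ => (T ^ k) x - (T ^ (k + 1)) x) ≤
      T.stableSubmodule := by
  rw [Submodule.span_le]
  rintro _ ⟨k, rfl⟩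
  have hshift := (hx.comp (tendsto_add_atTop_nat k)).neg
  rw [neg_zero] at hshift
  refine hshift.congr fun n => ?_
  rw [Function.comp_apply, neg_sub, map_sub, ← mul_apply_eq_comp, ← mul_apply_eq_comp, ← pow_add,
    ← pow_add, add_assoc]

theorem tendsto_pow_apply_of_sub_mem_stableSubmodule (hy : T y = y)
    (hxy : x - y ∈ T.stableSubmodule) : Tendsto (fun n : ℕ => (T ^ n) x) atTop (𝓝 y) := by
  have hfix (n : ℕ) : (T ^ n) y = y := by
    rw [FunLike.coe_pow_eq_iterate]
    exact Function.IsFixedPt.iterate hy n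
  have hdecay : Tendsto (fun n : ℕ => (T ^ n) (x - y) + y) atTop (𝓝 (0 + y)) :=
    Tendsto.add_const y hxy
  simpa only [map_sub, hfix, sub_add_cancel, zero_add] using hdecay

end NontriviallyNormedField

end ContinuousLinearMap

section RCLike

variable {𝕜 E : Type*} [RCLike 𝕜] [NormedAddCommGroup E] [NormedSpace 𝕜 E]

theorem exists_mapClusterPt_toWeakSpace
    (hrefl : Function.Surjective (NormedSpace.inclusionInDoubleDual 𝕜 E))
    {ι : Type*} {l : Filter ι} [l.NeBot] {u : ι → E} (hu : IsBounded (Set.range u)) :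
    ∃ y : E, MapClusterPt (toWeakSpace 𝕜 E y) l (toWeakSpace 𝕜 E ∘ u) := by
  have hcompact := NormedSpace.isCompact_closure_of_isBounded 𝕜 E (toWeakSpace 𝕜 E '' Set.range u)
    (by rwa [Set.preimage_image_eq _ (toWeakSpace 𝕜 E).injective]) fun z _ => ?_
  · obtain ⟨y, -, hy⟩ := hcompact.exists_clusterPt (f := map (toWeakSpace 𝕜 E ∘ u) l)
      (le_principal_iff.mpr (mem_map.mpr (Eventually.of_forall fun i =>
        subset_closure ⟨u i, Set.mem_range_self i, rfl⟩)))
    exact ⟨(toWeakSpace 𝕜 E).symm y, by rwa [LinearEquiv.apply_symm_apply]⟩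
  · obtain ⟨y, hy⟩ := hrefl (WeakDual.toStrongDual z)
    exact ⟨toWeakSpace 𝕜 E y, congrArg StrongDual.toWeakDual hy⟩

theorem MapClusterPt.dual_apply {ι : Type*} {l : Filter ι} {u : ι → E} {y : E}
    (hy : MapClusterPt (toWeakSpace 𝕜 E y) l (toWeakSpace 𝕜 E ∘ u)) (f : StrongDual 𝕜 E) :
    MapClusterPt (f y) l (fun i => f (u i)) :=
  hy.continuousAt_comp (f := fun x : WeakSpace 𝕜 E => f ((toWeakSpace 𝕜 E).symm x))
    (WeakBilin.eval_continuous (topDualPairing 𝕜 E).flip f).continuousAt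

theorem Submodule.mem_of_forall_dual_eq_zero {M : Submodule 𝕜 E} (hM : IsClosed (M : Set E))
    {z : E} (h : ∀ f : StrongDual 𝕜 E, (∀ m ∈ M, f m = 0) → f z = 0) : z ∈ M := by
  have : IsClosed (M : Set E) := hM -- makes `E ⧸ M` a normed space
  by_contra hz
  have hQz : M.mkQL z ≠ 0 := by
    rwa [M.mkQL_apply, Ne, Submodule.mkQ_apply, Submodule.Quotient.mk_eq_zero]
  obtain ⟨g, hg⟩ := SeparatingDual.exists_ne_zero (R := 𝕜) hQz
  refine hg (h (g.comp M.mkQL) fun m hm => ?_)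
  rw [ContinuousLinearMap.comp_apply, M.mkQL_apply, Submodule.mkQ_apply,
    (Submodule.Quotient.mk_eq_zero M).mpr hm, map_zero]

namespace ContinuousLinearMap

variable {T : E →L[𝕜] E} {x y : E}

theorem apply_eq_of_mapClusterPt_pow_apply
    (hx : Tendsto (fun n : ℕ => (T ^ (n + 1)) x - (T ^ n) x) atTop (𝓝 0))
    (hy : MapClusterPt (toWeakSpace 𝕜 E y) atTop (toWeakSpace 𝕜 E ∘ fun n => (T ^ n) x)) :
    T y = y := by
  refine (SeparatingDual.eq_iff_forall_dual_eq (R := 𝕜)).mpr fun f => sub_eq_zero.mp ?_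
  have hlim : Tendsto (fun n : ℕ => (f.comp T - f) ((T ^ n) x)) atTop (𝓝 0) := by
    have := (f.continuous.tendsto 0).comp hx
    rw [map_zero] at this
    refine this.congr fun n => ?_
    rw [Function.comp_apply, map_sub, sub_apply, comp_apply, ← mul_apply_eq_comp, ← pow_succ']
  exact eq_of_nhds_neBot (ClusterPt.mono (hy.dual_apply (f.comp T - f)) hlim)

theorem sub_mem_topologicalClosure_of_mapClusterPt
    (hy : MapClusterPt (toWeakSpace 𝕜 E y) atTop (toWeakSpace 𝕜 E ∘ fun n => (T ^ n) x)) :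
    x - y ∈ (Submodule.span 𝕜
      (Set.range fun k : ℕ => (T ^ k) x - (T ^ (k + 1)) x)).topologicalClosure := by
  refine Submodule.mem_of_forall_dual_eq_zero (Submodule.isClosed_topologicalClosure _)
    fun f hf => ?_
  have hconst (n : ℕ) : f ((T ^ n) x) = f x := by
    have := hf _ (Submodule.le_topologicalClosure _ (sub_pow_apply_mem_span_range T x n))
    rwa [map_sub, sub_eq_zero, eq_comm] at this
  have hfy := hy.dual_apply f
  simp only [hconst] at hfy
  rw [map_sub, sub_eq_zero]
  exact (eq_of_nhds_neBot (ClusterPt.mono hfy tendsto_const_nhds)).symm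

end ContinuousLinearMap

end RCLike

theorem stmt_13_general {X : Type*} [NormedAddCommGroup X] [NormedSpace ℂ X]
    (hrefl : Function.Surjective (NormedSpace.inclusionInDoubleDual ℂ X))
    (T : X →L[ℂ] X) (hpb : ∃ C : ℝ, ∀ n : ℕ, ‖T ^ n‖ ≤ C)
    (x : X) (hdiff : Tendsto (fun n : ℕ => ‖(T ^ (n + 1)) x - (T ^ n) x‖) atTop (𝓝 0)) :
    ∃ y : X, Tendsto (fun n : ℕ => (T ^ n) x) atTop (𝓝 y) := by
  have hx : Tendsto (fun n : ℕ => (T ^ (n + 1)) x - (T ^ n) x) atTop (𝓝 0) :=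
    tendsto_zero_iff_norm_tendsto_zero.mpr hdiff
  obtain ⟨y, hy⟩ :=
    exists_mapClusterPt_toWeakSpace (l := atTop) hrefl (T.isBounded_range_pow_apply hpb x)
  have hTy : T y = y := T.apply_eq_of_mapClusterPt_pow_apply hx hy
  have hxy : x - y ∈ T.stableSubmodule :=
    Submodule.topologicalClosure_minimal _ (T.span_range_pow_sub_le_stableSubmodule hx)
      (T.isClosed_stableSubmodule hpb) (T.sub_mem_topologicalClosure_of_mapClusterPt hy)
  exact ⟨y, T.tendsto_pow_apply_of_sub_mem_stableSubmodule hTy hxy⟩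

/-- **Lemma 4.3 (b).** Let `T ∈ B(X)` be power bounded on a reflexive Banach space `X`
and `x ∈ X` with `‖T^{n+1}x − Tⁿx‖ → 0`. Then the sequence `{Tⁿx}` converges strongly. -/
theorem stmt_13 {X : Type*} [NormedAddCommGroup X] [NormedSpace ℂ X] [CompleteSpace X]
    (hrefl : Function.Surjective (NormedSpace.inclusionInDoubleDual ℂ X))
    (T : X →L[ℂ] X) (hpb : ∃ C : ℝ, ∀ n : ℕ, ‖T ^ n‖ ≤ C)
    (x : X) (hdiff : Tendsto (fun n : ℕ => ‖(T ^ (n + 1)) x - (T ^ n) x‖) atTop (𝓝 0)) :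
    ∃ y : X, Tendsto (fun n : ℕ => (T ^ n) x) atTop (𝓝 y) :=
  stmt_13_general hrefl T hpb x hdiff
end

section
/- Let A and B be operators on H such that A and B* are essentially isometric, ‖Aⁿx‖ → 0 and ‖B*ⁿx‖ → 0 as n → ∞ for every x ∈ H, and let T ∈ B(H) be such that ATB − T is compact. Then the sequence {(1/n) Σ_{i=0}^{n−1} AⁱTBⁱ} converges in operator norm if and only if T admits a decomposition T = T₀ + K where T₀ ∈ B(H) satisfies AT₀B = T₀ and K is a compact operator on H. -/
/-!
The Cesàro means `Mₙ = (1/n) Σ_{i<n} AⁱTBⁱ` satisfy `A Mₙ B − Mₙ = (AⁿTBⁿ − T)/n`, which tends to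
zero since the powers of `A` and `B` are uniformly bounded (Banach–Steinhaus). Hence a norm limit
`L` satisfies `ALB = L`, and `T − L` is compact as a norm limit of the compact operators `T − Mₙ`.
Conversely, if `T = T₀ + K` then `AⁿTBⁿ = T₀ + AⁿKBⁿ`, and `‖AⁿK‖ → 0` because the strong
convergence `Aⁿ → 0` is uniform on the relatively compact set `K(unit ball)`; Cesàro averaging
keeps the limit `T₀`.
-/

open ContinuousLinearMap Filter Topology Finset

section Ring

variable {R : Type*}

theorem pow_succ_mul_mul_pow_succ [Monoid R] (a b t : R) (n : ℕ) :
    a ^ (n + 1) * t * b ^ (n + 1) = a * (a ^ n * t * b ^ n) * b := by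
  rw [pow_succ' a, pow_succ b]
  simp only [mul_assoc]

theorem pow_mul_mul_pow_eq_self [Monoid R] {a b t : R} (h : a * t * b = t) (n : ℕ) :
    a ^ n * t * b ^ n = t := by
  induction n with
  | zero => simp
  | succ n ih => rw [pow_succ_mul_mul_pow_succ, ih, h]

theorem mul_sum_pow_mul_mul_pow_mul_sub [Ring R] (a b t : R) (n : ℕ) :
    a * (∑ i ∈ range n, a ^ i * t * b ^ i) * b - ∑ i ∈ range n, a ^ i * t * b ^ i
      = a ^ n * t * b ^ n - t := by
  simp only [mul_sum, sum_mul, ← pow_succ_mul_mul_pow_succ, ← sum_sub_distrib]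
  simpa using sum_range_sub (fun i => a ^ i * t * b ^ i) n

end Ring

section NormedSpace

variable {𝕜 E F : Type*} [NontriviallyNormedField 𝕜] [NormedAddCommGroup E] [NormedSpace 𝕜 E]
  [NormedAddCommGroup F] [NormedSpace 𝕜 F]

theorem exists_norm_le_of_tendsto_zero [CompleteSpace E] {S : ℕ → E →L[𝕜] F}
    (hS : ∀ x, Tendsto (fun n => S n x) atTop (𝓝 0)) : ∃ C, ∀ n, ‖S n‖ ≤ C :=
  banach_steinhaus fun x => by
    obtain ⟨C, hC⟩ := (hS x).norm.bddAbove_range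
    exact ⟨C, fun n => hC ⟨n, rfl⟩⟩

theorem IsCompactOperator.pow_mul_mul_pow_sub {A B T : E →L[𝕜] E}
    (hT : IsCompactOperator (A * T * B - T)) (n : ℕ) :
    IsCompactOperator (A ^ n * T * B ^ n - T) := by
  induction n with
  | zero => simpa using isCompactOperator_zero
  | succ n ih =>
    have h : A ^ (n + 1) * T * B ^ (n + 1) - T =
        A * (A ^ n * T * B ^ n - T) * B + (A * T * B - T) := by
      rw [pow_succ_mul_mul_pow_succ]; noncomm_ring
    rw [h]
    exact ((ih.comp_clm B).clm_comp A).add hT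

end NormedSpace

section RCLike

variable {𝕜 E F G : Type*} [RCLike 𝕜] [NormedAddCommGroup E] [NormedSpace 𝕜 E]
  [NormedAddCommGroup F] [NormedSpace 𝕜 F] [NormedAddCommGroup G] [NormedSpace 𝕜 G]

theorem tendsto_comp_of_isCompactOperator_s14 [CompleteSpace E] {S : ℕ → E →L[𝕜] F}
    (hS : ∀ x, Tendsto (fun n => S n x) atTop (𝓝 0)) {K : G →L[𝕜] E} (hK : IsCompactOperator K) :
    Tendsto (fun n => (S n).comp K) atTop (𝓝 0) := by
  have hequi : Equicontinuous fun n => ⇑(S n) :=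
    ((NormedSpace.equicontinuous_TFAE S).out 1 5).2 (exists_norm_le_of_tendsto_zero hS)
  set Kb := closure (K '' Metric.closedBall 0 1)
  have hKb : IsCompact Kb := hK.isCompact_closure_image_closedBall 1
  -- Ascoli: on a compact set, pointwise convergence of an equicontinuous family is uniform.
  have hunif : TendstoUniformlyOn (fun n => ⇑(S n)) 0 atTop Kb := by
    have := (EquicontinuousOn.tendsto_uniformOnFun_iff_pi' (𝔖 := {Kb}) (by simpa using hKb)
      (fun _ _ => hequi.equicontinuousOn _) atTop 0).2 (tendsto_pi_nhds.2 fun y => hS y)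
    exact UniformOnFun.tendsto_iff_tendstoUniformlyOn.1 this Kb rfl
  refine Metric.tendsto_nhds.2 fun ε hε => ?_
  filter_upwards [Metric.tendstoUniformlyOn_iff.1 hunif (ε / 2) (half_pos hε)] with n hn
  rw [dist_zero_right]
  refine (opNorm_le_of_unit_norm (half_pos hε).le fun x hx => ?_).trans_lt (half_lt_self hε)
  have hx' : K x ∈ Kb := subset_closure ⟨x, by simp [hx], rfl⟩
  simpa using (hn _ hx').le

end RCLike

section Operator

variable {E : Type*} [NormedAddCommGroup E] [NormedSpace ℂ E] {A B T : E →L[ℂ] E}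

noncomputable def cesaroConj (A B T : E →L[ℂ] E) (n : ℕ) : E →L[ℂ] E :=
  (n : ℝ)⁻¹ • ∑ i ∈ range n, A ^ i * T * B ^ i

theorem mul_cesaroConj_mul_sub (n : ℕ) :
    A * cesaroConj A B T n * B - cesaroConj A B T n = (n : ℝ)⁻¹ • (A ^ n * T * B ^ n - T) := by
  rw [cesaroConj, mul_smul_comm, smul_mul_assoc, ← smul_sub, mul_sum_pow_mul_mul_pow_mul_sub]

theorem mul_mul_eq_of_tendsto_cesaroConj {L : E →L[ℂ] E} (hA : ∃ C, ∀ n, ‖A ^ n‖ ≤ C)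
    (hB : ∃ C, ∀ n, ‖B ^ n‖ ≤ C) (hL : Tendsto (cesaroConj A B T) atTop (𝓝 L)) :
    A * L * B = L := by
  obtain ⟨CA, hCA⟩ := hA
  obtain ⟨CB, hCB⟩ := hB
  have hbdd : IsBoundedUnder (· ≤ ·) atTop fun n => ‖A ^ n * T * B ^ n - T‖ := by
    refine isBoundedUnder_of ⟨CA * ‖T‖ * CB + ‖T‖, fun n => ?_⟩
    have hCA0 : 0 ≤ CA := (norm_nonneg _).trans (hCA 0)
    calc ‖A ^ n * T * B ^ n - T‖ ≤ ‖A ^ n‖ * ‖T‖ * ‖B ^ n‖ + ‖T‖ :=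
          (norm_sub_le _ _).trans (by gcongr; exact norm_mul₃_le)
      _ ≤ CA * ‖T‖ * CB + ‖T‖ := by gcongr <;> simp [hCA, hCB]
  have hzero : Tendsto (fun n => A * cesaroConj A B T n * B - cesaroConj A B T n) atTop (𝓝 0) := by
    simp only [mul_cesaroConj_mul_sub]
    exact (tendsto_inv_atTop_zero.comp tendsto_natCast_atTop_atTop).zero_smul_isBoundedUnder_le
      hbdd
  exact sub_eq_zero.1 <| tendsto_nhds_unique (((hL.const_mul A).mul_const B).sub hL) hzero

theorem isCompactOperator_cesaroConj_sub (hT : IsCompactOperator (A * T * B - T)) {n : ℕ}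
    (hn : n ≠ 0) : IsCompactOperator (cesaroConj A B T n - T) := by
  have h : cesaroConj A B T n - T = (n : ℝ)⁻¹ • ∑ i ∈ range n, (A ^ i * T * B ^ i - T) := by
    rw [cesaroConj, sum_sub_distrib, smul_sub, sum_const, card_range, ← Nat.cast_smul_eq_nsmul ℝ,
      inv_smul_smul₀ (Nat.cast_ne_zero.2 hn)]
  rw [h]
  exact ((compactOperator (RingHom.id ℂ) E E).sum_mem fun i _ => hT.pow_mul_mul_pow_sub i).smul _

theorem isCompactOperator_sub_of_tendsto_cesaroConj [CompleteSpace E] {L : E →L[ℂ] E}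
    (hT : IsCompactOperator (A * T * B - T)) (hL : Tendsto (cesaroConj A B T) atTop (𝓝 L)) :
    IsCompactOperator (T - L) := by
  refine isCompactOperator_of_tendsto (tendsto_const_nhds.sub hL) ?_
  filter_upwards [eventually_ne_atTop 0] with n hn
  simpa using (isCompactOperator_cesaroConj_sub hT hn).neg

theorem tendsto_cesaroConj_add_of_isCompactOperator [CompleteSpace E] {T₀ K : E →L[ℂ] E}
    (hA : ∀ x, Tendsto (fun n => (A ^ n) x) atTop (𝓝 0)) (hB : ∃ C, ∀ n, ‖B ^ n‖ ≤ C)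
    (hT₀ : A * T₀ * B = T₀) (hK : IsCompactOperator K) :
    Tendsto (cesaroConj A B (T₀ + K)) atTop (𝓝 T₀) := by
  have hAK : Tendsto (fun n => A ^ n * K) atTop (𝓝 0) := tendsto_comp_of_isCompactOperator_s14 hA hK
  have hterm : Tendsto (fun n => A ^ n * (T₀ + K) * B ^ n) atTop (𝓝 T₀) := by
    have h : ∀ n, A ^ n * (T₀ + K) * B ^ n = T₀ + A ^ n * K * B ^ n := fun n => by
      rw [mul_add, add_mul, pow_mul_mul_pow_eq_self hT₀]
    simp only [h]
    simpa using tendsto_const_nhds.add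
      (hAK.zero_mul_isBoundedUnder_le (isBoundedUnder_of hB))
  exact hterm.cesaro_smul

end Operator

theorem stmt_14_general {H : Type*} [NormedAddCommGroup H] [InnerProductSpace ℂ H]
    [CompleteSpace H]
    (A B T : H →L[ℂ] H)
    (hAn : ∀ x : H, Tendsto (fun n : ℕ => ‖(A ^ n) x‖) atTop (𝓝 0))
    (hBn : ∀ x : H, Tendsto (fun n : ℕ => ‖((adjoint B) ^ n) x‖) atTop (𝓝 0))
    (hT : IsCompactOperator (⇑(A * T * B - T))) :
    (∃ L : H →L[ℂ] H,
        Tendsto (fun n : ℕ => (n : ℝ)⁻¹ • ∑ i ∈ Finset.range n, A ^ i * T * B ^ i)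
          atTop (𝓝 L)) ↔
      (∃ T₀ K : H →L[ℂ] H, T = T₀ + K ∧ A * T₀ * B = T₀ ∧ IsCompactOperator ⇑K) := by
  have hA : ∀ x, Tendsto (fun n => (A ^ n) x) atTop (𝓝 0) := fun x =>
    tendsto_zero_iff_norm_tendsto_zero.2 (hAn x)
  have hB : ∃ C, ∀ n, ‖B ^ n‖ ≤ C := by
    obtain ⟨C, hC⟩ := exists_norm_le_of_tendsto_zero fun x =>
      tendsto_zero_iff_norm_tendsto_zero.2 (hBn x)
    refine ⟨C, fun n => ?_⟩
    simpa only [← star_eq_adjoint, ← star_pow, norm_star] using hC n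
  constructor
  · rintro ⟨L, hL⟩
    exact ⟨L, T - L, by abel, mul_mul_eq_of_tendsto_cesaroConj (exists_norm_le_of_tendsto_zero hA)
      hB hL, isCompactOperator_sub_of_tendsto_cesaroConj hT hL⟩
  · rintro ⟨T₀, K, rfl, hT₀, hK⟩
    exact ⟨T₀, tendsto_cesaroConj_add_of_isCompactOperator hA hB hT₀ hK⟩

/-- **Theorem 4.4.** Let `A` and `B*` be essentially isometric operators on `H` with
`‖Aⁿx‖ → 0` and `‖B*ⁿx‖ → 0` for all `x ∈ H`, and let `T ∈ B(H)` with `ATB − T`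
compact. Then `{(1/n) Σ_{i<n} AⁱTBⁱ}` converges in operator norm iff `T = T₀ + K`
where `AT₀B = T₀` and `K` is compact. -/
theorem stmt_14 {H : Type*} [NormedAddCommGroup H] [InnerProductSpace ℂ H]
    [CompleteSpace H] [TopologicalSpace.SeparableSpace H]
    (hinf : ¬ FiniteDimensional ℂ H)
    (A B T : H →L[ℂ] H)
    (hA : IsCompactOperator (⇑((1 : H →L[ℂ] H) - adjoint A * A)))
    (hB : IsCompactOperator (⇑((1 : H →L[ℂ] H) - B * adjoint B)))
    (hAn : ∀ x : H, Tendsto (fun n : ℕ => ‖(A ^ n) x‖) atTop (𝓝 0))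
    (hBn : ∀ x : H, Tendsto (fun n : ℕ => ‖((adjoint B) ^ n) x‖) atTop (𝓝 0))
    (hT : IsCompactOperator (⇑(A * T * B - T))) :
    (∃ L : H →L[ℂ] H,
        Tendsto (fun n : ℕ => (n : ℝ)⁻¹ • ∑ i ∈ Finset.range n, A ^ i * T * B ^ i)
          atTop (𝓝 L)) ↔
      (∃ T₀ K : H →L[ℂ] H, T = T₀ + K ∧ A * T₀ * B = T₀ ∧ IsCompactOperator ⇑K) :=
  stmt_14_general A B T hAn hBn hT
end

section
/- Let A, T ∈ B(H) satisfy: (i) I − AA* is compact; (ii) ‖A*ⁿx‖ → 0 as n → ∞ for every x ∈ H; (iii) A*TA − T is compact. Then the sequence {(1/n) Σ_{i=0}^{n−1} A*ⁱTAⁱ} converges in operator norm if and only if T admits a decomposition T = T₀ + K where T₀ ∈ B(H) satisfies A*T₀A = T₀ and K is a compact operator on H. -/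
open ContinuousLinearMap Filter Topology

section Aux

variable {H : Type*} [NormedAddCommGroup H] [InnerProductSpace ℂ H]
    [CompleteSpace H]

/-- If `B n → 0` strongly with uniform bound and `C` is compact, then `‖B n * C‖ → 0`. -/
lemma aux_comp_compact (B : ℕ → H →L[ℂ] H) (C : H →L[ℂ] H)
    (hC : IsCompactOperator ⇑C) {M : ℝ} (hM : ∀ n, ‖B n‖ ≤ M)
    (hB : ∀ y : H, Tendsto (fun n => ‖B n y‖) atTop (𝓝 0)) :
    Tendsto (fun n => B n * C) atTop (𝓝 0) := by
  have hM0 : 0 ≤ M := le_trans (norm_nonneg _) (hM 0)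
  rw [tendsto_zero_iff_norm_tendsto_zero]
  rw [Metric.tendsto_atTop]
  intro ε hε
  set δ : ℝ := ε / (2 * (M + 1)) with hδdef
  have hδ : 0 < δ := by positivity
  have hcpt : IsCompact (closure (⇑C '' Metric.closedBall 0 1)) :=
    hC.isCompact_closure_image_closedBall (f := (C : H →ₗ[ℂ] H)) 1
  obtain ⟨t, htfin, htcov⟩ :=
    (Metric.totallyBounded_iff.1 hcpt.totallyBounded) δ hδ
  have hev : ∀ᶠ n in atTop, ∀ y ∈ t, ‖B n y‖ < ε / 2 := by
    rw [htfin.eventually_all]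
    intro y _
    exact (hB y).eventually_lt_const (by positivity)
  have hδε : δ * (2 * (M + 1)) = ε := by rw [hδdef]; field_simp
  have hc : M * δ + ε / 2 < ε := by nlinarith [hδ, hM0, hδε]
  obtain ⟨N, hN⟩ := (Filter.eventually_atTop).1 hev
  refine ⟨N, fun n hn => ?_⟩
  rw [Real.dist_eq, sub_zero, abs_of_nonneg (norm_nonneg _)]
  refine lt_of_le_of_lt (ContinuousLinearMap.opNorm_le_bound _ (by positivity) ?_) hc
  intro x
  rcases eq_or_ne x 0 with rfl | hx
  · simp
  · have hxn : (0:ℝ) < ‖x‖ := norm_pos_iff.2 hx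
    set u : H := ‖x‖⁻¹ • x with hu
    have hu1 : ‖u‖ ≤ 1 := by
      rw [hu, norm_smul, norm_inv, norm_norm, inv_mul_cancel₀ hxn.ne']
    have hmem : C u ∈ closure (⇑C '' Metric.closedBall 0 1) :=
      subset_closure ⟨u, by simpa [Metric.mem_closedBall, dist_zero_right] using hu1, rfl⟩
    obtain ⟨y, hyt, hy⟩ : ∃ y ∈ t, C u ∈ Metric.ball y δ := by
      simpa using htcov hmem
    have hbound : ‖(B n) (C u)‖ ≤ M * δ + ε / 2 := by
      have h1 : ‖(B n) (C u) - (B n) y‖ ≤ M * δ := by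
        rw [← map_sub]
        calc ‖(B n) (C u - y)‖ ≤ ‖B n‖ * ‖C u - y‖ := (B n).le_opNorm _
          _ ≤ M * δ := by
              apply mul_le_mul (hM n) _ (norm_nonneg _) hM0
              rw [← dist_eq_norm]
              exact (Metric.mem_ball.1 hy).le
      have h2 : ‖(B n) y‖ < ε / 2 := hN n hn y hyt
      calc ‖(B n) (C u)‖ = ‖((B n) (C u) - (B n) y) + (B n) y‖ := by
            rw [sub_add_cancel]
        _ ≤ ‖(B n) (C u) - (B n) y‖ + ‖(B n) y‖ := norm_add_le _ _
        _ ≤ M * δ + ε / 2 := add_le_add h1 h2.le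
    have hxu : (B n * C) x = ‖x‖ • ((B n) (C u)) := by
      have : x = ‖x‖ • u := by rw [hu, smul_smul, mul_inv_cancel₀ hxn.ne', one_smul]
      rw [ContinuousLinearMap.mul_apply]
      conv_lhs => rw [this]
      rw [map_smul_of_tower, map_smul_of_tower]
    rw [hxu, norm_smul, Real.norm_eq_abs, abs_of_pos hxn, mul_comm]
    exact mul_le_mul_of_nonneg_right hbound hxn.le

end Aux

set_option maxHeartbeats 1000000 in
set_option synthInstance.maxHeartbeats 400000 in
/-- **Corollary 4.5.** Let `A, T ∈ B(H)` satisfy: (i) `I − AA*` compact;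
(ii) `‖A*ⁿx‖ → 0` for all `x ∈ H`; (iii) `A*TA − T` compact. Then
`{(1/n) Σ_{i<n} A*ⁱTAⁱ}` converges in operator norm iff `T = T₀ + K` where
`A*T₀A = T₀` and `K` is compact. -/
theorem stmt_15 {H : Type*} [NormedAddCommGroup H] [InnerProductSpace ℂ H]
    [CompleteSpace H] [TopologicalSpace.SeparableSpace H]
    (hinf : ¬ FiniteDimensional ℂ H)
    (A T : H →L[ℂ] H)
    (hA : IsCompactOperator (⇑((1 : H →L[ℂ] H) - A * adjoint A)))
    (hAn : ∀ x : H, Tendsto (fun n : ℕ => ‖((adjoint A) ^ n) x‖) atTop (𝓝 0))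
    (hT : IsCompactOperator (⇑(adjoint A * T * A - T))) :
    (∃ L : H →L[ℂ] H,
        Tendsto
          (fun n : ℕ => (n : ℝ)⁻¹ • ∑ i ∈ Finset.range n, (adjoint A) ^ i * T * A ^ i)
          atTop (𝓝 L)) ↔
      (∃ T₀ K : H →L[ℂ] H, T = T₀ + K ∧ adjoint A * T₀ * A = T₀ ∧ IsCompactOperator ⇑K) := by
  -- uniform bound on powers
  obtain ⟨M, hM⟩ : ∃ M, ∀ n : ℕ, ‖(adjoint A) ^ n‖ ≤ M := by
    apply banach_steinhaus (g := fun n : ℕ => (adjoint A) ^ n)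
    intro x
    obtain ⟨c, hc⟩ := (hAn x).bddAbove_range
    exact ⟨c, fun n => hc ⟨n, rfl⟩⟩
  have hM0 : 0 ≤ M := le_trans (norm_nonneg _) (hM 0)
  have hMA : ∀ n : ℕ, ‖A ^ n‖ ≤ M := by
    intro n
    have : ‖A ^ n‖ = ‖(adjoint A) ^ n‖ := by
      rw [← star_eq_adjoint, ← star_pow, norm_star]
    rw [this]; exact hM n
  constructor
  · rintro ⟨L, hL⟩
    refine ⟨L, T - L, by abel, ?_, ?_⟩
    · -- A* L A = L
      have h1 : Tendsto (fun n : ℕ =>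
          adjoint A * ((n : ℝ)⁻¹ • ∑ i ∈ Finset.range n, (adjoint A) ^ i * T * A ^ i) * A
            - ((n : ℝ)⁻¹ • ∑ i ∈ Finset.range n, (adjoint A) ^ i * T * A ^ i))
          atTop (𝓝 (adjoint A * L * A - L)) :=
        (((tendsto_const_nhds.mul hL).mul tendsto_const_nhds).sub hL)
      have key : ∀ n : ℕ,
          adjoint A * ((n : ℝ)⁻¹ • ∑ i ∈ Finset.range n, (adjoint A) ^ i * T * A ^ i) * A
            - ((n : ℝ)⁻¹ • ∑ i ∈ Finset.range n, (adjoint A) ^ i * T * A ^ i)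
          = (n : ℝ)⁻¹ • ((adjoint A) ^ n * T * A ^ n - T) := by
        intro n
        rw [mul_smul_comm, smul_mul_assoc, ← smul_sub]
        congr 1
        rw [Finset.mul_sum, Finset.sum_mul]
        rw [← Finset.sum_sub_distrib]
        rw [show ((adjoint A) ^ n * T * A ^ n - T)
            = (fun i : ℕ => (adjoint A) ^ i * T * A ^ i) n
              - (fun i : ℕ => (adjoint A) ^ i * T * A ^ i) 0 by simp]
        rw [← Finset.sum_range_sub (fun i : ℕ => (adjoint A) ^ i * T * A ^ i) n]
        apply Finset.sum_congr rfl
        intro i _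
        rw [pow_succ', pow_succ]
        simp only [mul_assoc]
      have h2 : Tendsto (fun n : ℕ =>
          adjoint A * ((n : ℝ)⁻¹ • ∑ i ∈ Finset.range n, (adjoint A) ^ i * T * A ^ i) * A
            - ((n : ℝ)⁻¹ • ∑ i ∈ Finset.range n, (adjoint A) ^ i * T * A ^ i))
          atTop (𝓝 0) := by
        rw [tendsto_zero_iff_norm_tendsto_zero]
        apply squeeze_zero (fun n => norm_nonneg _)
          (g := fun n : ℕ => (n : ℝ)⁻¹ * (M * ‖T‖ * M + ‖T‖))
        · intro n
          rw [key n, norm_smul, Real.norm_eq_abs, abs_of_nonneg (by positivity)]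
          apply mul_le_mul_of_nonneg_left _ (by positivity)
          calc ‖(adjoint A) ^ n * T * A ^ n - T‖
              ≤ ‖(adjoint A) ^ n * T * A ^ n‖ + ‖T‖ := norm_sub_le _ _
            _ ≤ M * ‖T‖ * M + ‖T‖ := by
                apply add_le_add _ le_rfl
                calc ‖(adjoint A) ^ n * T * A ^ n‖
                    ≤ ‖(adjoint A) ^ n * T‖ * ‖A ^ n‖ := norm_mul_le _ _
                  _ ≤ ‖(adjoint A) ^ n‖ * ‖T‖ * ‖A ^ n‖ := by
                      exact mul_le_mul_of_nonneg_right (norm_mul_le _ _) (norm_nonneg _)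
                  _ ≤ M * ‖T‖ * M := by
                      apply mul_le_mul (mul_le_mul (hM n) le_rfl (norm_nonneg _) hM0)
                        (hMA n) (norm_nonneg _) (by positivity)
        · have := tendsto_inv_atTop_nhds_zero_nat.mul_const (M * ‖T‖ * M + ‖T‖)
          simpa using this
      have := tendsto_nhds_unique h1 h2
      rw [sub_eq_zero] at this
      exact this
    · -- T - L is compact
      have hstep : ∀ i : ℕ, IsCompactOperator ⇑((adjoint A) ^ i * T * A ^ i - T) := by
        intro i
        induction i with
        | zero => simpa using isCompactOperator_zero
        | succ n ih =>
          have hid : (adjoint A) ^ (n+1) * T * A ^ (n+1) - T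
              = adjoint A * ((adjoint A) ^ n * T * A ^ n - T) * A + (adjoint A * T * A - T) := by
            rw [pow_succ', pow_succ]
            simp only [mul_sub, sub_mul, mul_assoc]
            abel
          have h1 : IsCompactOperator (⇑((adjoint A) ^ n * T * A ^ n - T) ∘ ⇑A) :=
            ih.comp_clm A
          have h2 : IsCompactOperator
              (⇑(adjoint A) ∘ (⇑((adjoint A) ^ n * T * A ^ n - T) ∘ ⇑A)) :=
            h1.continuous_comp (adjoint A).continuous
          have h3 : IsCompactOperator
              ⇑(adjoint A * ((adjoint A) ^ n * T * A ^ n - T) * A) := by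
            have : ⇑(adjoint A * ((adjoint A) ^ n * T * A ^ n - T) * A)
                = ⇑(adjoint A) ∘ (⇑((adjoint A) ^ n * T * A ^ n - T) ∘ ⇑A) := by
              ext x; simp [ContinuousLinearMap.mul_apply, Function.comp]
            rw [this]
            exact h2
          rw [hid]
          have h4 := h3.add hT
          have hco : ⇑(adjoint A * ((adjoint A) ^ n * T * A ^ n - T) * A
                + (adjoint A * T * A - T))
              = ⇑(adjoint A * ((adjoint A) ^ n * T * A ^ n - T) * A)
                + ⇑(adjoint A * T * A - T) := rfl
          rw [hco]
          exact h4
      have hstep' : ∀ i : ℕ, IsCompactOperator ⇑(T - (adjoint A) ^ i * T * A ^ i) := by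
        intro i
        have h := (hstep i).neg
        have : ⇑(T - (adjoint A) ^ i * T * A ^ i)
            = -⇑((adjoint A) ^ i * T * A ^ i - T) := by
          ext x; simp
        rw [this]
        exact h
      have hsum : ∀ n : ℕ, IsCompactOperator
          ⇑(∑ i ∈ Finset.range n, (T - (adjoint A) ^ i * T * A ^ i)) := by
        intro n
        induction n with
        | zero =>
          simp only [Finset.range_zero, Finset.sum_empty]
          have hz : ⇑(0 : H →L[ℂ] H) = (0 : H → H) := rfl
          rw [hz]
          exact isCompactOperator_zero
        | succ m ihm =>
          rw [Finset.sum_range_succ]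
          have h4 := ihm.add (hstep' m)
          have hco : ⇑((∑ i ∈ Finset.range m, (T - (adjoint A) ^ i * T * A ^ i))
                + (T - (adjoint A) ^ m * T * A ^ m))
              = ⇑(∑ i ∈ Finset.range m, (T - (adjoint A) ^ i * T * A ^ i))
                + ⇑(T - (adjoint A) ^ m * T * A ^ m) := rfl
          rw [hco]
          exact h4
      have hTminus : ∀ n : ℕ, 1 ≤ n → IsCompactOperator
          ⇑(T - (n : ℝ)⁻¹ • ∑ i ∈ Finset.range n, (adjoint A) ^ i * T * A ^ i) := by
        intro n hn
        have hn0 : (n : ℝ) ≠ 0 := Nat.cast_ne_zero.2 (by omega)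
        have hrw : T - (n : ℝ)⁻¹ • ∑ i ∈ Finset.range n, (adjoint A) ^ i * T * A ^ i
            = (n : ℝ)⁻¹ • ∑ i ∈ Finset.range n, (T - (adjoint A) ^ i * T * A ^ i) := by
          rw [Finset.sum_sub_distrib, smul_sub, Finset.sum_const, Finset.card_range]
          rw [show (n • T : H →L[ℂ] H) = (n : ℝ) • T by
            rw [← Nat.cast_smul_eq_nsmul ℝ]]
          rw [inv_smul_smul₀ hn0]
        rw [hrw]
        have h5 := (hsum n).smul ((n : ℝ)⁻¹)
        have hcoe : ⇑((n : ℝ)⁻¹ • ∑ i ∈ Finset.range n, (T - (adjoint A) ^ i * T * A ^ i))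
            = (n : ℝ)⁻¹ • ⇑(∑ i ∈ Finset.range n, (T - (adjoint A) ^ i * T * A ^ i)) := by
          ext x; simp
        rw [hcoe]
        exact h5
      have htend : Tendsto (fun n : ℕ =>
          T - (n : ℝ)⁻¹ • ∑ i ∈ Finset.range n, (adjoint A) ^ i * T * A ^ i)
          atTop (𝓝 (T - L)) := tendsto_const_nhds.sub hL
      exact isCompactOperator_of_tendsto htend
        (by filter_upwards [eventually_ge_atTop 1] with n hn using hTminus n hn)
  · rintro ⟨T₀, K, hdec, hT₀, hK⟩
    refine ⟨T₀, ?_⟩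
    have hT₀' : ∀ i : ℕ, (adjoint A) ^ i * T₀ * A ^ i = T₀ := by
      intro i
      induction i with
      | zero => simp
      | succ n ih =>
        rw [pow_succ, pow_succ']
        calc (adjoint A) ^ n * adjoint A * T₀ * (A * A ^ n)
            = (adjoint A) ^ n * (adjoint A * T₀ * A) * A ^ n := by
              simp only [mul_assoc]
          _ = (adjoint A) ^ n * T₀ * A ^ n := by rw [hT₀]
          _ = T₀ := ih
    -- ‖K Aⁿ‖ → 0
    have hKA : Tendsto (fun n : ℕ => ‖K * A ^ n‖) atTop (𝓝 0) := by
      have hC : IsCompactOperator ⇑(adjoint K * K) := by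
        have h := hK.continuous_comp (adjoint K).continuous
        have : ⇑(adjoint K * K) = ⇑(adjoint K) ∘ ⇑K := by
          ext x; simp [ContinuousLinearMap.mul_apply, Function.comp]
        rw [this]; exact h
      have hcomp : Tendsto (fun n : ℕ => (adjoint A) ^ n * (adjoint K * K)) atTop (𝓝 0) :=
        aux_comp_compact (fun n => (adjoint A) ^ n) (adjoint K * K) hC hM hAn
      have hsq : Tendsto (fun n : ℕ => ‖K * A ^ n‖ * ‖K * A ^ n‖) atTop (𝓝 0) := by
        apply squeeze_zero (fun n => by positivity)
          (g := fun n : ℕ => ‖(adjoint A) ^ n * (adjoint K * K)‖ * M)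
        · intro n
          have heq : ‖K * A ^ n‖ * ‖K * A ^ n‖
              = ‖star (K * A ^ n) * (K * A ^ n)‖ := by
            rw [CStarRing.norm_star_mul_self]
          rw [heq]
          have : star (K * A ^ n) * (K * A ^ n)
              = (adjoint A) ^ n * (adjoint K * K) * A ^ n := by
            rw [star_mul, star_pow, star_eq_adjoint, star_eq_adjoint]
            simp only [mul_assoc]
          rw [this]
          calc ‖(adjoint A) ^ n * (adjoint K * K) * A ^ n‖
              ≤ ‖(adjoint A) ^ n * (adjoint K * K)‖ * ‖A ^ n‖ := norm_mul_le _ _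
            _ ≤ ‖(adjoint A) ^ n * (adjoint K * K)‖ * M := by
                exact mul_le_mul_of_nonneg_left (hMA n) (norm_nonneg _)
        · have := (tendsto_zero_iff_norm_tendsto_zero.1 hcomp).mul_const M
          simpa using this
      have : Tendsto (fun n : ℕ => Real.sqrt (‖K * A ^ n‖ * ‖K * A ^ n‖)) atTop (𝓝 0) := by
        have h := (Real.continuous_sqrt.tendsto 0).comp hsq
        rw [Real.sqrt_zero] at h
        exact h
      refine this.congr fun n => ?_
      rw [Real.sqrt_mul_self (norm_nonneg _)]
    -- (A*)ⁿ K Aⁿ → 0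
    have hterm : Tendsto (fun n : ℕ => (adjoint A) ^ n * K * A ^ n) atTop (𝓝 0) := by
      rw [tendsto_zero_iff_norm_tendsto_zero]
      apply squeeze_zero (fun n => norm_nonneg _) (g := fun n : ℕ => M * ‖K * A ^ n‖)
      · intro n
        calc ‖(adjoint A) ^ n * K * A ^ n‖ = ‖(adjoint A) ^ n * (K * A ^ n)‖ := by
              rw [mul_assoc]
          _ ≤ ‖(adjoint A) ^ n‖ * ‖K * A ^ n‖ := norm_mul_le _ _
          _ ≤ M * ‖K * A ^ n‖ := mul_le_mul_of_nonneg_right (hM n) (norm_nonneg _)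
      · have := hKA.const_mul M
        simpa using this
    have hces : Tendsto
        (fun n : ℕ => (n : ℝ)⁻¹ • ∑ i ∈ Finset.range n, (adjoint A) ^ i * K * A ^ i)
        atTop (𝓝 0) := by
      have := hterm.cesaro_smul
      simpa using this
    have hfinal : Tendsto
        (fun n : ℕ => T₀ + (n : ℝ)⁻¹ • ∑ i ∈ Finset.range n, (adjoint A) ^ i * K * A ^ i)
        atTop (𝓝 T₀) := by
      have := (tendsto_const_nhds (x := T₀) (f := atTop (α := ℕ))).add hces
      simpa using this
    apply hfinal.congr'
    filter_upwards [eventually_ge_atTop 1] with n hn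
    have hn0 : (n : ℝ) ≠ 0 := Nat.cast_ne_zero.2 (by omega)
    have hterm_eq : ∀ i : ℕ, (adjoint A) ^ i * T * A ^ i
        = T₀ + (adjoint A) ^ i * K * A ^ i := by
      intro i
      rw [hdec, mul_add, add_mul, hT₀' i]
    rw [show (∑ i ∈ Finset.range n, (adjoint A) ^ i * T * A ^ i)
        = ∑ i ∈ Finset.range n, (T₀ + (adjoint A) ^ i * K * A ^ i) from
      Finset.sum_congr rfl fun i _ => hterm_eq i]
    rw [Finset.sum_add_distrib, smul_add, Finset.sum_const, Finset.card_range]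
    rw [show (n • T₀ : H →L[ℂ] H) = (n : ℝ) • T₀ by rw [← Nat.cast_smul_eq_nsmul ℝ]]
    rw [inv_smul_smul₀ hn0]
end

section
/- Let S be the unilateral shift on ℓ²(ℕ, ℂ), i.e. S(x₀, x₁, x₂, …) = (0, x₀, x₁, …). Suppose T ∈ B(ℓ²) is an asymptotic Toeplitz operator in the Calkin algebra, i.e. there exists Q ∈ B(ℓ²) such that inf{‖S*ⁿTSⁿ − Q + K‖ : K compact} → 0 as n → ∞. Then T is essentially Toeplitz, i.e. S*TS − T is a compact operator. -/
/-!
Write `‖X‖ₑ` for the essential norm, the distance from `X` to the compact operators. The shift is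
an isometry and `1 - S S*` has rank one, so `X ≡ S (S* X S) S*` modulo compacts, whence
`‖X‖ₑ ≤ ‖S* X S‖ₑ`. Iterating, for `D = S* T S - T`,
`‖D‖ₑ ≤ ‖S*ⁿ D Sⁿ‖ₑ ≤ ‖S*ⁿ⁺¹ T Sⁿ⁺¹ - Q‖ₑ + ‖S*ⁿ T Sⁿ - Q‖ₑ → 0`,
and the compact operators are closed, so `D` is compact.
-/

open ContinuousLinearMap Filter Topology

section EssNorm

variable {𝕜 E : Type*} [NontriviallyNormedField 𝕜] [NormedAddCommGroup E] [NormedSpace 𝕜 E]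

noncomputable def essNorm (X : E →L[𝕜] E) : ℝ :=
  ‖(compactOperator (RingHom.id 𝕜) E E).mkQ X‖

lemma essNorm_nonneg (X : E →L[𝕜] E) : 0 ≤ essNorm X := norm_nonneg _

lemma essNorm_sub_le (X Y : E →L[𝕜] E) : essNorm (X - Y) ≤ essNorm X + essNorm Y := by
  simpa only [essNorm, map_sub] using norm_sub_le _ _

lemma essNorm_eq_zero_iff [CompleteSpace E] {X : E →L[𝕜] E} :
    essNorm X = 0 ↔ IsCompactOperator X :=
  haveI : IsClosed ((compactOperator (RingHom.id 𝕜) E E).toAddSubgroup : Set (E →L[𝕜] E)) :=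
    isClosed_setOfPred_isCompactOperator
  QuotientAddGroup.norm_mk_eq_zero

lemma essNorm_congr {X Y : E →L[𝕜] E} (h : IsCompactOperator (X - Y)) :
    essNorm X = essNorm Y := by
  rw [essNorm, essNorm, Submodule.mkQ_apply, Submodule.mkQ_apply,
    (Submodule.Quotient.eq (compactOperator (RingHom.id 𝕜) E E)).2 h]

lemma sInf_norm_add_compact_eq_essNorm (X : E →L[𝕜] E) :
    sInf {r : ℝ | ∃ K : E →L[𝕜] E, IsCompactOperator K ∧ r = ‖X + K‖} = essNorm X := by
  apply le_antisymm
  · refine le_of_forall_gt fun r hr => ?_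
    obtain ⟨Y, hY, hYr⟩ := QuotientAddGroup.norm_lt_iff.1 hr
    have hK : IsCompactOperator (Y - X) := (Submodule.Quotient.eq _).1 hY
    refine (csInf_le (s := {r : ℝ | ∃ K : E →L[𝕜] E, IsCompactOperator K ∧ r = ‖X + K‖})
      ⟨0, ?_⟩ ⟨Y - X, hK, rfl⟩).trans_lt ?_
    · rintro _ ⟨K, -, rfl⟩
      exact norm_nonneg _
    · rwa [add_sub_cancel]
  · refine le_csInf ⟨_, 0, isCompactOperator_zero, rfl⟩ ?_
    rintro _ ⟨K, hK, rfl⟩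
    calc essNorm X = essNorm (X + K) := essNorm_congr (by simpa using hK.neg)
      _ ≤ ‖X + K‖ := Submodule.Quotient.norm_mk_le _ _

lemma IsCompactOperator.mul_mul {K : E →L[𝕜] E} (hK : IsCompactOperator K) (A B : E →L[𝕜] E) :
    IsCompactOperator (A * K * B) :=
  (hK.clm_comp A).comp_clm B

lemma essNorm_mul_mul_le {A B : E →L[𝕜] E} (hA : ‖A‖ ≤ 1) (hB : ‖B‖ ≤ 1) (X : E →L[𝕜] E) :
    essNorm (A * X * B) ≤ essNorm X := by
  refine le_of_forall_gt fun r hr => ?_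
  obtain ⟨Y, hY, hYr⟩ := QuotientAddGroup.norm_lt_iff.1 hr
  have hK : IsCompactOperator (A * Y * B - A * X * B) := by
    rw [← sub_mul, ← mul_sub]
    exact ((Submodule.Quotient.eq _).1 hY).mul_mul A B
  calc essNorm (A * X * B) = essNorm (A * Y * B) := (essNorm_congr hK).symm
    _ ≤ ‖A * Y * B‖ := Submodule.Quotient.norm_mk_le _ _
    _ ≤ ‖A‖ * ‖Y‖ * ‖B‖ := norm_mul₃_le
    _ ≤ 1 * ‖Y‖ * 1 := by gcongr
    _ < r := by simpa using hYr

lemma essNorm_le_essNorm_mul_mul {V W : E →L[𝕜] E} (hV : ‖V‖ ≤ 1) (hW : ‖W‖ ≤ 1)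
    (hVW : IsCompactOperator ⇑(1 - V * W)) (X : E →L[𝕜] E) :
    essNorm X ≤ essNorm (W * X * V) := by
  have hK : IsCompactOperator (X - V * (W * X * V) * W) := by
    have : X - V * (W * X * V) * W = 1 * (1 - V * W) * X + V * W * X * (1 - V * W) * 1 := by
      noncomm_ring
    rw [this, FunLike.coe_add]
    exact (hVW.mul_mul 1 X).add (hVW.mul_mul (V * W * X) 1)
  calc essNorm X = essNorm (V * (W * X * V) * W) := essNorm_congr hK
    _ ≤ essNorm (W * X * V) := essNorm_mul_mul_le hV hW _

lemma essNorm_le_essNorm_pow_mul_pow {V W : E →L[𝕜] E} (hV : ‖V‖ ≤ 1) (hW : ‖W‖ ≤ 1)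
    (hVW : IsCompactOperator ⇑(1 - V * W)) (X : E →L[𝕜] E) (n : ℕ) :
    essNorm X ≤ essNorm (W ^ n * X * V ^ n) := by
  induction n with
  | zero => simp
  | succ n ih =>
    calc essNorm X ≤ essNorm (W ^ n * X * V ^ n) := ih
      _ ≤ essNorm (W * (W ^ n * X * V ^ n) * V) := essNorm_le_essNorm_mul_mul hV hW hVW _
      _ = essNorm (W ^ (n + 1) * X * V ^ (n + 1)) := by
        rw [pow_succ' W, pow_succ V]; noncomm_ring

end EssNorm

lemma isCompactOperator_smulRight {𝕜 E F : Type*} [NontriviallyNormedField 𝕜]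
    [LocallyCompactSpace 𝕜] [NormedAddCommGroup E] [NormedSpace 𝕜 E] [NormedAddCommGroup F]
    [NormedSpace 𝕜 F] (c : E →L[𝕜] 𝕜) (f : F) : IsCompactOperator (c.smulRight f) :=
  (isCompactOperator_of_locallyCompactSpace_dom c).clm_comp ((1 : 𝕜 →L[𝕜] 𝕜).smulRight f)

local notation "ℓ²" => lp (fun _ : ℕ => ℂ) 2

def IsUnilateralShift (S : ℓ² →L[ℂ] ℓ²) : Prop :=
  ∀ x : ℓ², (S x : ℕ → ℂ) 0 = 0 ∧ ∀ n, (S x : ℕ → ℂ) (n + 1) = (x : ℕ → ℂ) n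

namespace IsUnilateralShift

variable {S : ℓ² →L[ℂ] ℓ²}

lemma inner_map_map (hS : IsUnilateralShift S) (x y : ℓ²) :
    inner ℂ (S x) (S y) = inner ℂ x y := by
  rw [lp.inner_eq_tsum, lp.inner_eq_tsum,
    (lp.summable_inner (𝕜 := ℂ) (S x) (S y)).tsum_eq_zero_add]
  simp [(hS x).1, (hS x).2, (hS y).2]

lemma norm_le_one (hS : IsUnilateralShift S) : ‖S‖ ≤ 1 :=
  S.opNorm_le_bound zero_le_one fun x => by
    rw [one_mul]
    exact ((S : ℓ² →ₗ[ℂ] ℓ²).isometryOfInner hS.inner_map_map).norm_map x |>.le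

lemma map_single (hS : IsUnilateralShift S) (n : ℕ) :
    S (lp.single 2 n 1) = lp.single 2 (n + 1) 1 := by
  ext k
  cases k with
  | zero => simp [(hS _).1]
  | succ k => simp [(hS _).2, lp.single_apply, Pi.single_apply]

lemma adjoint_apply (hS : IsUnilateralShift S) (x : ℓ²) (n : ℕ) :
    (adjoint S x : ℕ → ℂ) n = (x : ℕ → ℂ) (n + 1) := by
  have h := adjoint_inner_right S (lp.single 2 n 1) x
  rw [hS.map_single, lp.inner_single_left, lp.inner_single_left] at h
  simpa using h

lemma one_sub_mul_adjoint (hS : IsUnilateralShift S) :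
    1 - S * adjoint S = (innerSL ℂ (lp.single 2 0 1 : ℓ²)).smulRight (lp.single 2 0 1 : ℓ²) := by
  ext x k
  cases k with
  | zero => simp [(hS _).1, lp.inner_single_left]
  | succ k => simp [(hS _).2, hS.adjoint_apply, lp.inner_single_left]

lemma isCompactOperator_one_sub_mul_adjoint (hS : IsUnilateralShift S) :
    IsCompactOperator ⇑(1 - S * adjoint S) := by
  rw [hS.one_sub_mul_adjoint]
  exact isCompactOperator_smulRight _ _

end IsUnilateralShift

/-- **Proposition 4.9.** Let `S` be the unilateral shift on `ℓ²(ℕ, ℂ)`. If `T` is an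
asymptotic Toeplitz operator in the Calkin algebra, i.e. for some `Q` the distance of
`S*ⁿTSⁿ − Q` to the compact operators tends to `0`, then `T` is essentially Toeplitz:
`S*TS − T` is compact. -/
theorem stmt_17
    (S : lp (fun _ : ℕ => ℂ) 2 →L[ℂ] lp (fun _ : ℕ => ℂ) 2)
    (hS : ∀ x : lp (fun _ : ℕ => ℂ) 2,
      (S x : ∀ _ : ℕ, ℂ) 0 = 0 ∧ ∀ n : ℕ, (S x : ∀ _ : ℕ, ℂ) (n + 1) = (x : ∀ _ : ℕ, ℂ) n)
    (T : lp (fun _ : ℕ => ℂ) 2 →L[ℂ] lp (fun _ : ℕ => ℂ) 2)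
    (hT : ∃ Q : lp (fun _ : ℕ => ℂ) 2 →L[ℂ] lp (fun _ : ℕ => ℂ) 2,
      Tendsto (fun n : ℕ =>
          sInf {r : ℝ | ∃ K : lp (fun _ : ℕ => ℂ) 2 →L[ℂ] lp (fun _ : ℕ => ℂ) 2,
            IsCompactOperator ⇑K ∧ r = ‖(adjoint S) ^ n * T * S ^ n - Q + K‖})
        atTop (𝓝 0)) :
    IsCompactOperator (⇑(adjoint S * T * S - T)) := by
  obtain ⟨Q, hQ⟩ := hT
  have hS : IsUnilateralShift S := hS
  set a : ℕ → ℝ := fun n => essNorm (adjoint S ^ n * T * S ^ n - Q)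
  have ha : Tendsto a atTop (𝓝 0) := by
    simpa only [sInf_norm_add_compact_eq_essNorm] using hQ
  have hbound (n : ℕ) : essNorm (adjoint S * T * S - T) ≤ a (n + 1) + a n :=
    calc essNorm (adjoint S * T * S - T)
        ≤ essNorm (adjoint S ^ n * (adjoint S * T * S - T) * S ^ n) :=
          essNorm_le_essNorm_pow_mul_pow hS.norm_le_one
            ((adjoint.norm_map S).trans_le hS.norm_le_one)
            hS.isCompactOperator_one_sub_mul_adjoint _ n
      _ = essNorm ((adjoint S ^ (n + 1) * T * S ^ (n + 1) - Q)
            - (adjoint S ^ n * T * S ^ n - Q)) := by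
          rw [pow_succ (adjoint S), pow_succ' S]; noncomm_ring
      _ ≤ a (n + 1) + a n := essNorm_sub_le _ _
  have hlim : Tendsto (fun n => a (n + 1) + a n) atTop (𝓝 0) := by
    simpa using (ha.comp (tendsto_add_atTop_nat 1)).add ha
  exact essNorm_eq_zero_iff.1 (le_antisymm (ge_of_tendsto' hlim hbound) (essNorm_nonneg _))
end
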